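/- Let 𝔻 be an oriented ribbon graph and let e ∈ E(𝔻) be a bridge. Then C(𝔻; X, Y, Z) = X · C(𝔻/e; X, Y, Z) in ℤ[X, Y, Z]. -/

import Mathlib

open Equiv Finset

/-- The number of orbits, i.e. classes of the equivalence relation generated by `r`. -/
noncomputable def orbCount {α : Type*} (r : α → α → Prop) : ℕ := Nat.card (Quot r)

variable {B : Type} [Fintype B] [DecidableEq B]

/-- The first-return map of a permutation `σ` of `B` to a subset `P ⊆ B`:
`b ↦ σ^m b` for the minimal `m ≥ 1` with `σ^m b ∈ P`. -/
def firstRet (σ : Equiv.Perm B) (P : Finset B) (b : ↥P) : ↥P :=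
  have h : ∃ m, 0 < m ∧ (σ ^ m) (b : B) ∈ P :=
    ⟨orderOf σ, orderOf_pos σ, by rw [pow_orderOf_eq_one]; simpa using b.2⟩
  ⟨(σ ^ Nat.find h) (b : B), (Nat.find_spec h).2⟩

/-- An oriented ribbon graph: a triple of permutations of a finite set `B` such that
`σ₁` is a fixed-point-free involution and `σ₀ ∘ σ₁ ∘ σ₂ = id`. -/
structure RibbonGraph (B : Type) [Fintype B] [DecidableEq B] where
  s0 : Equiv.Perm B
  s1 : Equiv.Perm B
  s2 : Equiv.Perm B
  invol : ∀ b, s1 (s1 b) = b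
  fpf : ∀ b, s1 b ≠ b
  triple : ∀ b, s0 (s1 (s2 b)) = b

namespace RibbonGraph

variable (D : RibbonGraph B)

/-- `v(𝔻)`: the number of orbits of `σ₀`. -/
noncomputable def vN : ℕ := orbCount fun a b : B => D.s0 a = b

/-- `e(𝔻)`: the number of orbits of `σ₁`. -/
noncomputable def eN : ℕ := orbCount fun a b : B => D.s1 a = b

/-- `f(𝔻)`: the number of orbits of `σ₂`. -/
noncomputable def fN : ℕ := orbCount fun a b : B => D.s2 a = b

/-- `k(𝔻)`: the number of orbits of the subgroup generated by `σ₀` and `σ₁`. -/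
noncomputable def kN : ℕ := orbCount fun a b : B => D.s0 a = b ∨ D.s1 a = b

/-- The genus `g(𝔻) = (2k − v + e − f)/2`. -/
noncomputable def gN : ℕ := (2 * D.kN + D.eN - D.vN - D.fN) / 2

/-- `𝔻` is connected if the subgroup generated by `σ₀` and `σ₁` acts transitively on `B`. -/
def Connected : Prop :=
  ∀ a b : B, ∃ g ∈ Subgroup.closure ({D.s0, D.s1} : Set (Equiv.Perm B)), g a = b

end RibbonGraph

/-- A ribbon graph together with the bookkeeping needed for spanning subgraphs,
deletions and contractions: an ambient vertex permutation `s0` and edge involution `s1`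
on `B`, and the set `act` of active half-edges (which is `s1`-invariant, `s1` being a
fixed-point-free involution on it).  The σ₀-orbits of `B` disjoint from `act` are the
isolated vertices; each contributes one vertex, one face and one connected component. -/
structure RG (B : Type) [Fintype B] [DecidableEq B] where
  act : Finset B
  s0 : Equiv.Perm B
  s1 : Equiv.Perm B
  invol : ∀ b, s1 (s1 b) = b
  fpf : ∀ b ∈ act, s1 b ≠ b
  closed : ∀ b ∈ act, s1 b ∈ act

/-- A plain ribbon graph, viewed with all of its half-edges active. -/
def RibbonGraph.toRG (D : RibbonGraph B) : RG B :=
  ⟨Finset.univ, D.s0, D.s1, D.invol, fun b _ => D.fpf b, fun _ _ => Finset.mem_univ _⟩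

namespace RG

variable (G : RG B)

/-- The edge (σ₁-orbit) `{a, σ₁ a}` of a half-edge `a`. -/
def edgeOf (a : B) : Finset B := {a, G.s1 a}

/-- The edge set `E(𝔻)`: the set of orbits `{b, σ₁ b}` of `σ₁`. -/
def edges : Finset (Finset B) := G.act.image G.edgeOf

/-- `e(𝔻)`: the number of edges. -/
def numE : ℕ := G.edges.card

/-- `v(𝔻)`: the number of vertices, i.e. of `σ₀`-orbits (first-return orbits on the
active part together with the isolated vertices). -/
noncomputable def numV : ℕ := orbCount fun a b : B => G.s0 a = b

/-- The number of isolated vertices: `σ₀`-orbits of `B` disjoint from the active part. -/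
noncomputable def isolated : ℕ :=
  Nat.card {x : Quot (fun a b : B => G.s0 a = b) // ∀ a : B, Quot.mk _ a = x → a ∉ G.act}

/-- The vertex permutation: first-return map of `σ₀` to the active half-edges. -/
def ret0 : ↥G.act → ↥G.act := firstRet G.s0 G.act

/-- The edge involution restricted to the active half-edges. -/
def ret1 : ↥G.act → ↥G.act := fun b => ⟨G.s1 b, G.closed b b.2⟩

/-- `f(𝔻)`: the number of faces, i.e. orbits of the face permutation σ₂ = (σ₀σ₁)⁻¹
(an isolated vertex contributes one face). -/
noncomputable def numF : ℕ :=
  orbCount (fun a b : ↥G.act => G.ret0 (G.ret1 a) = b) + G.isolated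

/-- `k(𝔻)`: the number of connected components (an isolated vertex is a component). -/
noncomputable def numK : ℕ :=
  orbCount (fun a b : ↥G.act => G.ret0 a = b ∨ G.ret1 a = b) + G.isolated

/-- The nullity `n(𝔻) = e(𝔻) − v(𝔻) + k(𝔻)`. -/
noncomputable def numN : ℕ := G.numE + G.numK - G.numV

/-- The genus `g(𝔻) = (2k(𝔻) − v(𝔻) + e(𝔻) − f(𝔻))/2`. -/
noncomputable def genus : ℕ := (2 * G.numK + G.numE - G.numV - G.numF) / 2

/-- The spanning subgraph `H_S` determined by a set `S` of edges: the active half-edges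
are those of `B_S = ⋃_{e ∈ S} e`; the ambient permutations are unchanged. -/
def spanning (S : Finset (Finset B)) : RG B where
  act := G.act.filter fun b => b ∈ S.biUnion id ∧ G.s1 b ∈ S.biUnion id
  s0 := G.s0
  s1 := G.s1
  invol := G.invol
  fpf := fun b hb => G.fpf b (Finset.mem_filter.1 hb).1
  closed := by
    intro b hb
    rw [Finset.mem_filter] at hb ⊢
    exact ⟨G.closed b hb.1, hb.2.2, by rw [G.invol]; exact hb.2.1⟩

/-- The deletion `𝔻 − e` of the edge `e = {a, σ₁ a}`: the spanning subgraph on the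
remaining edges. -/
def del (a : B) : RG B where
  act := G.act \ {a, G.s1 a}
  s0 := G.s0
  s1 := G.s1
  invol := G.invol
  fpf := fun b hb => G.fpf b (Finset.mem_sdiff.1 hb).1
  closed := by
    intro b hb
    rw [Finset.mem_sdiff, Finset.mem_insert, Finset.mem_singleton] at hb ⊢
    push_neg at hb ⊢
    exact ⟨G.closed b hb.1,
      fun h => absurd (by rw [← h, G.invol] : b = G.s1 a) hb.2.2,
      fun h => absurd (G.s1.injective h) hb.2.1⟩

/-- The contraction `𝔻/e` of the edge `e = {a, σ₁ a}`: the two half-edges of `e` become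
inactive and the vertex permutation becomes `τ = σ₀ ∘ (a, σ₁ a)`. -/
def contr (a : B) : RG B where
  act := G.act \ {a, G.s1 a}
  s0 := G.s0 * Equiv.swap a (G.s1 a)
  s1 := G.s1
  invol := G.invol
  fpf := fun b hb => G.fpf b (Finset.mem_sdiff.1 hb).1
  closed := by
    intro b hb
    rw [Finset.mem_sdiff, Finset.mem_insert, Finset.mem_singleton] at hb ⊢
    push_neg at hb ⊢
    exact ⟨G.closed b hb.1,
      fun h => absurd (by rw [← h, G.invol] : b = G.s1 a) hb.2.2,
      fun h => absurd (G.s1.injective h) hb.2.1⟩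

/-- The edge `{a, σ₁ a}` is a loop if its two half-edges lie in the same `σ₀`-orbit. -/
def IsLoop (a : B) : Prop := G.s0.SameCycle a (G.s1 a)

/-- The edge `{a, σ₁ a}` is a bridge if deleting it increases the number of connected
components by one. -/
noncomputable def IsBridge (a : B) : Prop := (G.del a).numK = G.numK + 1

/-- `δ = −A² − A⁻²`. -/
noncomputable def lDelta : LaurentPolynomial ℤ :=
  -LaurentPolynomial.T 2 - LaurentPolynomial.T (-2)

/-- The Kauffman bracket of a ribbon graph:
`⟨𝔻⟩ = Σ_{S ⊆ E(𝔻)} A^{e(𝔻) − 2|S|} δ^{f(H_S) − 1}`. -/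
noncomputable def bracket : LaurentPolynomial ℤ :=
  ∑ S ∈ G.edges.powerset,
    LaurentPolynomial.T ((G.numE : ℤ) - 2 * S.card) * lDelta ^ ((G.spanning S).numF - 1)

/-- The Bollobás–Riordan–Tutte polynomial (subgraph expansion), in variables
`X = X₀`, `Y = X₁`, `Z = X₂`:
`C(𝔻; X, Y, Z) = Σ_{S ⊆ E(𝔻)} (X−1)^{k(H_S) − k(𝔻)} Y^{n(H_S)} Z^{g(H_S)}`. -/
noncomputable def brt : MvPolynomial (Fin 3) ℤ :=
  ∑ S ∈ G.edges.powerset,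
    (MvPolynomial.X 0 - 1) ^ ((G.spanning S).numK - G.numK) *
      MvPolynomial.X 1 ^ (G.spanning S).numN *
      MvPolynomial.X 2 ^ (G.spanning S).genus

/-- Two half-edges lie in the same connected component (where an inactive half-edge
belongs to the isolated vertex given by its `σ₀`-orbit). -/
def sameComp (x y : B) : Prop :=
  Relation.EqvGen (fun u v => G.s0 u = v ∨ (u ∈ G.act ∧ G.s1 u = v)) x y

/-- `M(H_S) = e(𝔻) − 2|S| + 2 f(H_S) − 2`, the maximal power of `A` contributed by the
spanning subgraph `H_S` to the Kauffman bracket. -/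
noncomputable def mVal (S : Finset (Finset B)) : ℤ :=
  (G.numE : ℤ) - 2 * S.card + 2 * (G.spanning S).numF - 2

/-- The spanning trees of `𝔻`: edge sets `T` with `k(H_T) = 1` and `n(H_T) = 0`. -/
noncomputable def spanningTrees : Finset (Finset (Finset B)) :=
  G.edges.powerset.filter fun T => (G.spanning T).numK = 1 ∧ (G.spanning T).numN = 0

/-- The number `i(T)` of internally active edges of `T`: edges `t ∈ T` that are
`≺`-minimal in their cut `{e ∈ E(𝔻) : k(H_{(T∖{t})∪{e}}) = 1}`. -/
noncomputable def numIntActive [LinearOrder (Finset B)] (T : Finset (Finset B)) : ℕ :=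
  (T.filter fun t =>
    ∀ e ∈ G.edges, (G.spanning (insert e (T.erase t))).numK = 1 → t ≤ e).card

/-- The set `𝓔(T)` of externally active edges of `T`: edges `e ∉ T` that are
`≺`-minimal in `{f ∈ T ∪ {e} : k(H_{(T∪{e})∖{f}}) = 1}`. -/
noncomputable def extActives [LinearOrder (Finset B)] (T : Finset (Finset B)) :
    Finset (Finset B) :=
  G.edges.filter fun e => e ∉ T ∧
    ∀ f ∈ insert e T, (G.spanning ((insert e T).erase f)).numK = 1 → e ≤ f

end RG


open Equiv Finset Relation

section QuotTools

variable {α : Type}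

theorem quotCard_congr {r r' : α → α → Prop} (h : ∀ x y, r x y ↔ r' x y) :
    Nat.card (Quot r) = Nat.card (Quot r') := by
  have : r = r' := funext fun x => funext fun y => propext (h x y)
  rw [this]

theorem eqvGen_closure {r s : α → α → Prop} (h : ∀ x y, r x y → EqvGen s x y) {x y : α}
    (hxy : EqvGen r x y) : EqvGen s x y := by
  induction hxy with
  | rel u v huv => exact h u v huv
  | refl u => exact EqvGen.refl u
  | symm u v _ ih => exact ih.symm u v
  | trans u v w _ _ ih1 ih2 => exact ih1.trans u v w ih2

theorem quotCard_eq_of_eqvGen {r r' : α → α → Prop}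
    (h : ∀ x y, EqvGen r x y ↔ EqvGen r' x y) :
    Nat.card (Quot r) = Nat.card (Quot r') := by
  refine Nat.card_congr
    ⟨Quot.lift (Quot.mk r') (fun a b hab => Quot.eqvGen_sound ((h a b).1 (EqvGen.rel _ _ hab))),
     Quot.lift (Quot.mk r) (fun a b hab => Quot.eqvGen_sound ((h a b).2 (EqvGen.rel _ _ hab))),
     ?_, ?_⟩
  · intro q; induction q using Quot.ind; rfl
  · intro q; induction q using Quot.ind; rfl

theorem quotCard_le [Finite α] {r r' : α → α → Prop} (h : ∀ x y, r x y → r' x y) :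
    Nat.card (Quot r') ≤ Nat.card (Quot r) := by
  refine Nat.card_le_card_of_surjective
    (Quot.lift (Quot.mk r') (fun a b hab => Quot.sound (h a b hab))) ?_
  intro q; induction q using Quot.ind with | _ x => exact ⟨Quot.mk r x, rfl⟩

/-- the relation `r` with the extra pair `{A,B}` glued in. -/
def glueRel (r : α → α → Prop) (A B : α) : α → α → Prop :=
  fun x y => r x y ∨ (x = A ∧ y = B) ∨ (x = B ∧ y = A)

theorem eqvGen_glueRel_iff {r : α → α → Prop} {A B : α} {x y : α} :
    EqvGen (glueRel r A B) x y ↔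
      EqvGen r x y ∨ (EqvGen r x A ∧ EqvGen r B y) ∨ (EqvGen r x B ∧ EqvGen r A y) := by
  constructor
  · intro h
    induction h with
    | rel u v huv =>
      rcases huv with h | ⟨rfl, rfl⟩ | ⟨rfl, rfl⟩
      · exact Or.inl (EqvGen.rel _ _ h)
      · exact Or.inr (Or.inl ⟨EqvGen.refl _, EqvGen.refl _⟩)
      · exact Or.inr (Or.inr ⟨EqvGen.refl _, EqvGen.refl _⟩)
    | refl u => exact Or.inl (EqvGen.refl u)
    | symm u v _ ih =>
      rcases ih with h | ⟨h1, h2⟩ | ⟨h1, h2⟩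
      · exact Or.inl (h.symm u v)
      · exact Or.inr (Or.inr ⟨h2.symm _ _, h1.symm _ _⟩)
      · exact Or.inr (Or.inl ⟨h2.symm _ _, h1.symm _ _⟩)
    | trans u v w _ _ ih1 ih2 =>
      rcases ih1 with h | ⟨h1, h2⟩ | ⟨h1, h2⟩ <;>
        rcases ih2 with g | ⟨g1, g2⟩ | ⟨g1, g2⟩
      · exact Or.inl (h.trans _ _ _ g)
      · exact Or.inr (Or.inl ⟨h.trans _ _ _ g1, g2⟩)
      · exact Or.inr (Or.inr ⟨h.trans _ _ _ g1, g2⟩)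
      · exact Or.inr (Or.inl ⟨h1, h2.trans _ _ _ g⟩)
      · exact Or.inr (Or.inl ⟨h1, g2⟩)
      · exact Or.inl (h1.trans _ _ _ g2)
      · exact Or.inr (Or.inr ⟨h1, h2.trans _ _ _ g⟩)
      · exact Or.inl (h1.trans _ _ _ g2)
      · exact Or.inr (Or.inr ⟨h1, g2⟩)
  · intro h
    have hr : ∀ u v, EqvGen r u v → EqvGen (glueRel r A B) u v :=
      fun u v huv => eqvGen_closure (fun x y hxy => EqvGen.rel _ _ (Or.inl hxy)) huv
    have hAB : EqvGen (glueRel r A B) A B := EqvGen.rel _ _ (Or.inr (Or.inl ⟨rfl, rfl⟩))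
    rcases h with h | ⟨h1, h2⟩ | ⟨h1, h2⟩
    · exact hr _ _ h
    · exact ((hr _ _ h1).trans _ _ _ hAB).trans _ _ _ (hr _ _ h2)
    · exact ((hr _ _ h1).trans _ _ _ (hAB.symm _ _)).trans _ _ _ (hr _ _ h2)

theorem quotCard_glue_of_eqvGen {r : α → α → Prop} {A B : α} (h : EqvGen r A B) :
    Nat.card (Quot (glueRel r A B)) = Nat.card (Quot r) := by
  refine quotCard_eq_of_eqvGen fun x y => ?_
  rw [eqvGen_glueRel_iff]
  constructor
  · rintro (h1 | ⟨h1, h2⟩ | ⟨h1, h2⟩)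
    · exact h1
    · exact (h1.trans _ _ _ h).trans _ _ _ h2
    · exact (h1.trans _ _ _ (h.symm _ _)).trans _ _ _ h2
  · exact Or.inl

theorem quotCard_glue_of_not [Finite α] {r : α → α → Prop} {A B : α} (h : ¬ EqvGen r A B) :
    Nat.card (Quot r) = Nat.card (Quot (glueRel r A B)) + 1 := by
  classical
  have hne : Quot.mk r A ≠ Quot.mk r B := fun hc => h (Quot.eq.1 hc)
  -- the canonical surjection
  let u : Quot r → Quot (glueRel r A B) :=
    Quot.lift (Quot.mk _) (fun a b hab => Quot.sound (Or.inl hab))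
  let F : {q : Quot r // q ≠ Quot.mk r B} → Quot (glueRel r A B) := fun q => u q.1
  have hFbij : Function.Bijective F := by
    constructor
    · rintro ⟨q1, hq1⟩ ⟨q2, hq2⟩ hF
      induction q1 using Quot.ind with | _ x =>
      induction q2 using Quot.ind with | _ y =>
      have : EqvGen (glueRel r A B) x y := Quot.eq.1 hF
      rw [eqvGen_glueRel_iff] at this
      rcases this with h1 | ⟨h1, h2⟩ | ⟨h1, h2⟩
      · exact Subtype.ext (Quot.eqvGen_sound h1)
      · exact absurd (Quot.eqvGen_sound (h2.symm _ _)) hq2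
      · exact absurd (Quot.eqvGen_sound h1) hq1
    · intro q
      induction q using Quot.ind with | _ x =>
      by_cases hx : EqvGen r x B
      · refine ⟨⟨Quot.mk r A, hne⟩, ?_⟩
        show Quot.mk (glueRel r A B) A = Quot.mk _ x
        refine Quot.eqvGen_sound ?_
        rw [eqvGen_glueRel_iff]
        exact Or.inr (Or.inl ⟨EqvGen.refl _, hx.symm _ _⟩)
      · exact ⟨⟨Quot.mk r x, fun hc => hx (Quot.eq.1 hc)⟩, rfl⟩
  have h1 : Nat.card (Quot (glueRel r A B)) = Nat.card {q : Quot r // q ≠ Quot.mk r B} :=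
    (Nat.card_congr (Equiv.ofBijective F hFbij)).symm
  rw [h1]
  haveI : Fintype (Quot r) := Fintype.ofFinite _
  rw [Nat.card_eq_fintype_card, Nat.card_eq_fintype_card]
  have h2 : Fintype.card {q : Quot r // q ≠ Quot.mk r B} = Fintype.card (Quot r) - 1 := by
    simp [Fintype.card_subtype_compl]
  have h3 : 0 < Fintype.card (Quot r) := Fintype.card_pos_iff.2 ⟨Quot.mk r B⟩
  omega

end QuotTools
section SC
variable {γ : Type} [Fintype γ] [DecidableEq γ]

theorem eqvGen_perm_pow (σ : Equiv.Perm γ) (x : γ) (m : ℕ) :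
    EqvGen (fun u v => σ u = v) x ((σ ^ m) x) := by
  induction m with
  | zero => exact EqvGen.refl x
  | succ n ih =>
    refine ih.trans _ _ _ (EqvGen.rel _ _ ?_)
    rw [pow_succ']; rfl

theorem sameCycle_iff_eqvGen (σ : Equiv.Perm γ) (x y : γ) :
    σ.SameCycle x y ↔ EqvGen (fun u v => σ u = v) x y := by
  constructor
  · intro h
    obtain ⟨i, -, -, hi⟩ := h.exists_pow_eq σ
    rw [← hi]; exact eqvGen_perm_pow σ x i
  · intro h
    induction h with
    | rel u v huv => exact ⟨1, by simpa using huv⟩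
    | refl u => exact Equiv.Perm.SameCycle.refl σ u
    | symm u v _ ih => exact ih.symm
    | trans u v w _ _ ih1 ih2 => exact ih1.trans ih2

theorem sameCycle_pow_right (σ : Equiv.Perm γ) (x : γ) (m : ℕ) :
    σ.SameCycle x ((σ ^ m) x) :=
  ⟨(m : ℤ), by rw [zpow_natCast]⟩

/-- going around the cycle of `C`: if `τ` agrees with `σ` on the cycle of `C` away from `C`,
then `σ C` is still `EqvGen τ`-related to `C`. -/
theorem eqvGen_around (σ τ : Equiv.Perm γ) (C : γ)
    (h : ∀ u, σ.SameCycle C u → u ≠ C → τ u = σ u) :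
    EqvGen (fun x y => τ x = y) (σ C) C := by
  have hex : ∃ m, 0 < m ∧ (σ ^ m) C = C :=
    ⟨orderOf σ, orderOf_pos σ, by rw [pow_orderOf_eq_one]; rfl⟩
  set m := Nat.find hex with hm
  obtain ⟨hmpos, hmC⟩ := Nat.find_spec hex
  have key : ∀ i, 1 ≤ i → i ≤ m → EqvGen (fun x y => τ x = y) (σ C) ((σ ^ i) C) := by
    intro i h1 h2
    induction i with
    | zero => omega
    | succ n ih =>
      rcases Nat.eq_or_lt_of_le h1 with h1' | h1'
      · rw [← h1']; simpa using EqvGen.refl (σ C)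
      · have hn1 : 1 ≤ n := by omega
        have hnm : n ≤ m := by omega
        refine (ih hn1 hnm).trans _ _ _ (EqvGen.rel _ _ ?_)
        have hne : (σ ^ n) C ≠ C := by
          intro hc
          exact absurd (Nat.find_min hex (m := n) (by omega) ⟨by omega, hc⟩) (by simp)
        rw [h _ (sameCycle_pow_right σ C n) hne, pow_succ']; rfl
  have := key m hmpos le_rfl
  rw [hmC] at this
  exact this

/-- merging two cycles: `EqvGen` of `σ * swap A B` equals that of `σ` glued along `{A,B}`. -/
theorem merge_eqvGen (σ : Equiv.Perm γ) {A B : γ} (h : ¬ σ.SameCycle A B) (x y : γ) :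
    EqvGen (fun u v => (σ * Equiv.swap A B) u = v) x y ↔
      EqvGen (glueRel (fun u v => σ u = v) A B) x y := by
  set τ := σ * Equiv.swap A B with hτ
  have hτA : τ A = σ B := by simp [hτ]
  have hτB : τ B = σ A := by simp [hτ]
  have hτu : ∀ u, u ≠ A → u ≠ B → τ u = σ u := by
    intro u h1 h2; simp [hτ, Equiv.swap_apply_of_ne_of_ne h1 h2]
  -- around lemmas
  have haroundB : EqvGen (fun u v => τ u = v) (σ B) B := by
    refine eqvGen_around σ τ B (fun u hu hne => hτu u ?_ hne)
    intro hc; rw [hc] at hu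
    exact h (hu.symm)
  have haroundA : EqvGen (fun u v => τ u = v) (σ A) A := by
    refine eqvGen_around σ τ A (fun u hu hne => hτu u hne ?_)
    intro hc; rw [hc] at hu
    exact h hu
  have hab : EqvGen (fun u v => τ u = v) A B :=
    (EqvGen.rel A (σ B) hτA).trans _ _ _ haroundB
  have gpair : EqvGen (glueRel (fun u v => σ u = v) A B) A B :=
    EqvGen.rel _ _ (Or.inr (Or.inl ⟨rfl, rfl⟩))
  have gstep : ∀ u : γ, EqvGen (glueRel (fun u v => σ u = v) A B) u (σ u) :=
    fun u => EqvGen.rel _ _ (Or.inl rfl)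
  constructor
  · refine eqvGen_closure fun u v huv => ?_
    by_cases h1 : u = A
    · subst h1; rw [← huv, hτA]
      exact gpair.trans _ _ _ (gstep B)
    by_cases h2 : u = B
    · subst h2; rw [← huv, hτB]
      exact (gpair.symm _ _).trans _ _ _ (gstep A)
    · rw [← huv, hτu u h1 h2]
      exact gstep u
  · refine eqvGen_closure fun u v huv => ?_
    rcases huv with huv | ⟨rfl, rfl⟩ | ⟨rfl, rfl⟩
    · rw [← huv]
      by_cases h1 : u = A
      · rw [h1]
        exact ((EqvGen.rel A (σ B) hτA).trans _ _ _ haroundB).trans _ _ _ (EqvGen.rel B (σ A) hτB)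
      by_cases h2 : u = B
      · rw [h2]
        exact ((EqvGen.rel B (σ A) hτB).trans _ _ _ haroundA).trans _ _ _ (EqvGen.rel A (σ B) hτA)
      · exact EqvGen.rel _ _ (hτu u h1 h2)
    · exact hab
    · exact hab.symm _ _

theorem swap_merge_card (σ : Equiv.Perm γ) {A B : γ} (h : ¬ σ.SameCycle A B) :
    Nat.card (Quot (fun u v : γ => σ u = v))
      = Nat.card (Quot (fun u v : γ => (σ * Equiv.swap A B) u = v)) + 1 := by
  rw [quotCard_eq_of_eqvGen (merge_eqvGen σ h)]
  exact quotCard_glue_of_not (fun hc => h ((sameCycle_iff_eqvGen σ A B).2 hc))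

theorem sameCycle_swap_merge (σ : Equiv.Perm γ) {A B : γ} (h : ¬ σ.SameCycle A B) :
    (σ * Equiv.swap A B).SameCycle A B := by
  rw [sameCycle_iff_eqvGen, merge_eqvGen σ h]
  exact EqvGen.rel _ _ (Or.inr (Or.inl ⟨rfl, rfl⟩))

/-- splitting: if `A ≠ B` lie in the same `σ`-cycle then they are in different
`σ * swap A B`-cycles. -/
theorem swap_split_not_sameCycle (σ : Equiv.Perm γ) {A B : γ} (hAB : A ≠ B)
    (h : σ.SameCycle A B) : ¬ (σ * Equiv.swap A B).SameCycle A B := by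
  set τ := σ * Equiv.swap A B with hτ
  have hτA : τ A = σ B := by simp [hτ]
  have hτB : τ B = σ A := by simp [hτ]
  have hτu : ∀ u, u ≠ A → u ≠ B → τ u = σ u := by
    intro u h1 h2; simp [hτ, Equiv.swap_apply_of_ne_of_ne h1 h2]
  -- minimal n ≥ 1 with σ^n A = B
  have hex : ∃ n, 0 < n ∧ (σ ^ n) A = B := by
    obtain ⟨i, hi, -, hieq⟩ := h.exists_pow_eq σ
    exact ⟨i, hi, hieq⟩
  set n := Nat.find hex with hn
  obtain ⟨hnpos, hnB⟩ := Nat.find_spec hex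
  have hinter : ∀ j, 0 < j → j < n → (σ ^ j) A ∉ ({A, B} : Set γ) := by
    intro j hj1 hj2 hjmem
    rcases hjmem with hjA | hjB
    · -- σ^j A = A with 0 < j; then σ^(n-j) A = B with smaller index
      have : (σ ^ (n - j)) A = B := by
        have : (σ ^ (n - j)) ((σ ^ j) A) = B := by
          rw [← Equiv.Perm.mul_apply, ← pow_add]
          rwa [Nat.sub_add_cancel (le_of_lt hj2)]
        rwa [hjA] at this
      exact absurd (Nat.find_min hex (by omega) ⟨by omega, this⟩) (by simp)
    · exact absurd (Nat.find_min hex hj2 ⟨hj1, hjB⟩) (by simp)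
  -- τ^m B = σ^m A for 1 ≤ m ≤ n
  have key : ∀ m, 1 ≤ m → m ≤ n → (τ ^ m) B = (σ ^ m) A := by
    intro m h1 h2
    induction m with
    | zero => omega
    | succ k ih =>
      rcases Nat.eq_or_lt_of_le h1 with h1' | h1'
      · rw [← h1']; simp [pow_one, hτB]
      · have hk1 : 1 ≤ k := by omega
        have hkn : k ≤ n := by omega
        have hknlt : k < n := by omega
        have hmem := hinter k (by omega) hknlt
        rw [pow_succ', Equiv.Perm.mul_apply, ih hk1 hkn,
          hτu _ (fun hc => hmem (Or.inl hc)) (fun hc => hmem (Or.inr hc)), ← Equiv.Perm.mul_apply,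
          ← pow_succ']
  have hτnB : (τ ^ n) B = B := by rw [key n hnpos le_rfl, hnB]
  -- forward τ-orbit of B stays in {σ^m A : 1 ≤ m ≤ n}
  have orbit : ∀ k : ℕ, ∃ m, 1 ≤ m ∧ m ≤ n ∧ (τ ^ k) B = (σ ^ m) A := by
    intro k
    induction k with
    | zero => exact ⟨n, hnpos, le_rfl, by simp [hn, hnB]⟩
    | succ k ih =>
      obtain ⟨m, hm1, hm2, hmeq⟩ := ih
      rcases Nat.eq_or_lt_of_le hm2 with hm' | hm'
      · -- at B: next is σ A
        refine ⟨1, le_rfl, hnpos, ?_⟩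
        rw [pow_succ', Equiv.Perm.mul_apply, hmeq, hm', hnB, hτB, pow_one]
      · have hmem := hinter m (by omega) hm'
        refine ⟨m + 1, by omega, by omega, ?_⟩
        rw [pow_succ', Equiv.Perm.mul_apply, hmeq,
          hτu _ (fun hc => hmem (Or.inl hc)) (fun hc => hmem (Or.inr hc)), ← Equiv.Perm.mul_apply,
          ← pow_succ']
  intro hcon
  obtain ⟨i, -, -, hieq⟩ := (hcon.symm).exists_pow_eq τ
  obtain ⟨m, hm1, hm2, hmeq⟩ := orbit i
  rw [hmeq] at hieq
  rcases Nat.eq_or_lt_of_le hm2 with hm' | hm'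
  · rw [hm', hnB] at hieq; exact hAB hieq.symm
  · exact hinter m (by omega) hm' (Or.inl hieq)

theorem swap_split_card (σ : Equiv.Perm γ) {A B : γ} (hAB : A ≠ B) (h : σ.SameCycle A B) :
    Nat.card (Quot (fun u v : γ => (σ * Equiv.swap A B) u = v))
      = Nat.card (Quot (fun u v : γ => σ u = v)) + 1 := by
  have h2 := swap_split_not_sameCycle σ hAB h
  have h3 := swap_merge_card (σ * Equiv.swap A B) h2
  rwa [show σ * Equiv.swap A B * Equiv.swap A B = σ by
    rw [mul_assoc, Equiv.swap_mul_self, mul_one]] at h3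

end SC
section Ret
variable {γ : Type} [Fintype γ] [DecidableEq γ]

-- local copy of firstRet (same definition as in the target file)
def firstRet' (σ : Equiv.Perm γ) (P : Finset γ) (b : ↥P) : ↥P :=
  have h : ∃ m, 0 < m ∧ (σ ^ m) (b : γ) ∈ P :=
    ⟨orderOf σ, orderOf_pos σ, by rw [pow_orderOf_eq_one]; simpa using b.2⟩
  ⟨(σ ^ Nat.find h) (b : γ), (Nat.find_spec h).2⟩

theorem firstRet'_exists (σ : Equiv.Perm γ) (T : Finset γ) (b : ↥T) :
    ∃ m, 0 < m ∧ (σ ^ m) (b : γ) ∈ T :=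
  ⟨orderOf σ, orderOf_pos σ, by rw [pow_orderOf_eq_one]; simpa using b.2⟩

theorem firstRet'_coe_eq (σ : Equiv.Perm γ) (T : Finset γ) (b : ↥T) {m : ℕ} (hm : 0 < m)
    (hmem : (σ ^ m) (b : γ) ∈ T) (hmin : ∀ i, 0 < i → i < m → (σ ^ i) (b : γ) ∉ T) :
    (firstRet' σ T b : γ) = (σ ^ m) (b : γ) := by
  have h := firstRet'_exists σ T b
  have heq : (firstRet' σ T b : γ) = (σ ^ Nat.find h) (b : γ) := rfl
  rw [heq]
  obtain ⟨hp, hmem'⟩ := Nat.find_spec h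
  have h1 : Nat.find h ≤ m := Nat.find_min' h ⟨hm, hmem⟩
  have h2 : ¬ Nat.find h < m := fun hc => hmin _ hp hc hmem'
  have h3 : Nat.find h = m := by omega
  rw [h3]

theorem firstRet'_spec (σ : Equiv.Perm γ) (T : Finset γ) (b : ↥T) :
    ∃ m, 0 < m ∧ (σ ^ m) (b : γ) = ↑(firstRet' σ T b) ∧
      ∀ i, 0 < i → i < m → (σ ^ i) (b : γ) ∉ T := by
  have h := firstRet'_exists σ T b
  exact ⟨Nat.find h, (Nat.find_spec h).1, rfl,
    fun i h1 h2 hc => Nat.find_min h h2 ⟨h1, hc⟩⟩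

theorem firstRet'_inv (σ : Equiv.Perm γ) (T : Finset γ) (b : ↥T) :
    firstRet' σ⁻¹ T (firstRet' σ T b) = b := by
  obtain ⟨m, hm, heq, hmin⟩ := firstRet'_spec σ T b
  have key : ∀ i, i ≤ m → ((σ⁻¹) ^ i) ((firstRet' σ T b : γ)) = (σ ^ (m - i)) (b : γ) := by
    intro i hi
    have h1 : (σ ^ i) ((σ ^ (m - i)) (b : γ)) = (σ ^ m) (b : γ) := by
      rw [← Equiv.Perm.mul_apply, ← pow_add]
      congr 2
      omega
    rw [← heq, inv_pow]
    exact (Equiv.Perm.eq_inv_iff_eq.2 h1).symm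
  apply Subtype.ext
  refine (firstRet'_coe_eq σ⁻¹ T _ hm ?_ ?_).trans ?_
  · rw [key m le_rfl]; simpa using b.2
  · intro i h1 h2
    rw [key i (le_of_lt h2)]
    exact hmin (m - i) (by omega) (by omega)
  · rw [key m le_rfl]; simp

noncomputable def retPerm (σ : Equiv.Perm γ) (T : Finset γ) : Equiv.Perm ↥T where
  toFun := firstRet' σ T
  invFun := firstRet' σ⁻¹ T
  left_inv := firstRet'_inv σ T
  right_inv := by
    intro b
    have h := firstRet'_inv σ⁻¹ T b
    rwa [inv_inv] at h

theorem retPerm_apply (σ : Equiv.Perm γ) (T : Finset γ) (b : ↥T) :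
    retPerm σ T b = firstRet' σ T b := rfl

theorem firstRet_sim (F G : Equiv.Perm γ) (T : Finset γ) (hout : ∀ u, u ∉ T → F u = G u)
    (z w : ↥T) (h0 : F ↑z = G ↑w) : (firstRet' F T z : γ) = ↑(firstRet' G T w) := by
  have key : ∀ m, 0 < m → (∀ i, 0 < i → i < m → (G ^ i) (w : γ) ∉ T) →
      (F ^ m) (z : γ) = (G ^ m) (w : γ) := by
    intro m
    induction m with
    | zero => omega
    | succ k ih =>
      intro _ hmin
      rcases Nat.eq_zero_or_pos k with rfl | hk
      · simpa using h0
      · have h1 : (F ^ k) (z : γ) = (G ^ k) (w : γ) := ih hk (fun i a b => hmin i a (by omega))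
        have h2 : (G ^ k) (w : γ) ∉ T := hmin k hk (by omega)
        have e1 : (F ^ (k+1)) (z:γ) = F ((F ^ k) (z:γ)) := by rw [pow_succ']; rfl
        have e2 : (G ^ (k+1)) (w:γ) = G ((G ^ k) (w:γ)) := by rw [pow_succ']; rfl
        rw [e1, e2, h1, hout _ h2]
  obtain ⟨m, hm, heq, hmin⟩ := firstRet'_spec G T w
  have hFm : (F ^ m) (z:γ) = ↑(firstRet' G T w) := by rw [key m hm hmin, heq]
  refine (firstRet'_coe_eq F T z hm ?_ ?_).trans hFm
  · rw [hFm]; exact (firstRet' G T w).2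
  · intro i h1 h2
    rw [key i h1 (fun j a b => hmin j a (by omega))]
    exact hmin i h1 h2

/-- raw first-return for arbitrary base points (existence passed explicitly). -/
noncomputable def rawRet (σ : Equiv.Perm γ) (T : Finset γ) (z : γ)
    (h : ∃ m, 0 < m ∧ (σ ^ m) z ∈ T) : γ := (σ ^ Nat.find h) z

theorem rawRet_coe (σ : Equiv.Perm γ) (T : Finset γ) (b : ↥T) :
    (firstRet' σ T b : γ) = rawRet σ T ↑b (firstRet'_exists σ T b) := rfl

theorem rawRet_eq (σ : Equiv.Perm γ) (T : Finset γ) (z : γ)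
    (h : ∃ m, 0 < m ∧ (σ ^ m) z ∈ T) {m : ℕ} (hm : 0 < m)
    (hmem : (σ ^ m) z ∈ T) (hmin : ∀ i, 0 < i → i < m → (σ ^ i) z ∉ T) :
    rawRet σ T z h = (σ ^ m) z := by
  obtain ⟨hp, hmem'⟩ := Nat.find_spec h
  have h1 : Nat.find h ≤ m := Nat.find_min' h ⟨hm, hmem⟩
  have h2 : ¬ Nat.find h < m := fun hc => hmin _ hp hc hmem'
  have h3 : Nat.find h = m := by omega
  rw [rawRet, h3]

theorem rawRet_spec (σ : Equiv.Perm γ) (T : Finset γ) (z : γ)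
    (h : ∃ m, 0 < m ∧ (σ ^ m) z ∈ T) :
    ∃ m, 0 < m ∧ (σ ^ m) z = rawRet σ T z h ∧ rawRet σ T z h ∈ T ∧
      ∀ i, 0 < i → i < m → (σ ^ i) z ∉ T :=
  ⟨Nat.find h, (Nat.find_spec h).1, rfl, (Nat.find_spec h).2,
    fun i h1 h2 hc => Nat.find_min h h2 ⟨h1, hc⟩⟩

theorem rawRet_concat_ex (σ : Equiv.Perm γ) (T : Finset γ) (z : γ)
    (hz : ∃ m, 0 < m ∧ (σ ^ m) z ∈ T) {k : ℕ} (hk : 0 < k)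
    (hint : ∀ i, 0 < i → i ≤ k → (σ ^ i) z ∉ T) :
    ∃ m, 0 < m ∧ (σ ^ m) ((σ ^ k) z) ∈ T := by
  obtain ⟨m, hm, heq, hmemT, hmin⟩ := rawRet_spec σ T z hz
  have hkm : k < m := by
    by_contra hc
    exact hint m hm (by omega) (by rw [heq]; exact hmemT)
  refine ⟨m - k, by omega, ?_⟩
  rw [← Equiv.Perm.mul_apply, ← pow_add, show m - k + k = m by omega, heq]
  exact hmemT

theorem rawRet_concat_eq (σ : Equiv.Perm γ) (T : Finset γ) (z : γ)
    (hz : ∃ m, 0 < m ∧ (σ ^ m) z ∈ T) {k : ℕ} (hk : 0 < k)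
    (hint : ∀ i, 0 < i → i ≤ k → (σ ^ i) z ∉ T)
    (h2 : ∃ m, 0 < m ∧ (σ ^ m) ((σ ^ k) z) ∈ T) :
    rawRet σ T z hz = rawRet σ T ((σ ^ k) z) h2 := by
  obtain ⟨m, hm, heq, hmemT, hmin⟩ := rawRet_spec σ T z hz
  have hkm : k < m := by
    by_contra hc
    exact hint m hm (by omega) (by rw [heq]; exact hmemT)
  have hshift : ∀ i, (σ ^ i) ((σ ^ k) z) = (σ ^ (i + k)) z := by
    intro i
    rw [← Equiv.Perm.mul_apply, ← pow_add]
  have hex2 : (σ ^ (m - k)) ((σ ^ k) z) ∈ T := by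
    rw [hshift, show m - k + k = m by omega, heq]; exact hmemT
  rw [← heq]
  rw [rawRet_eq σ T ((σ ^ k) z) h2 (m := m - k) (by omega) hex2 ?_]
  · rw [hshift, show m - k + k = m by omega]
  · intro i h1 h2
    rw [hshift]
    exact hmin (i + k) (by omega) (by omega)

/-- the subset of `↥Q` corresponding to `P`. -/
def inSub (Q P : Finset γ) : Finset ↥Q := Q.attach.filter fun u => (u : γ) ∈ P

@[simp] theorem mem_inSub {Q P : Finset γ} {x : ↥Q} : x ∈ inSub Q P ↔ (x : γ) ∈ P := by
  simp [inSub]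

/-- `Q`-entries of the forward `σ`-orbit are enumerated by the first-return map. -/
theorem retPerm_pow_surj (σ : Equiv.Perm γ) (Q : Finset γ) (x : ↥Q) :
    ∀ n : ℕ, (σ ^ n) (x : γ) ∈ Q → ∃ j : ℕ, (((retPerm σ Q) ^ j) x : γ) = (σ ^ n) (x : γ) := by
  intro n
  induction n using Nat.strong_induction_on with
  | _ n ih =>
    intro hn
    rcases Nat.eq_zero_or_pos n with rfl | hn0
    · exact ⟨0, by simp⟩
    have hx0 : (σ ^ 0) (x : γ) ∈ Q := by simpa using x.2
    set i0 := Nat.findGreatest (fun i => (σ ^ i) (x : γ) ∈ Q) (n - 1) with hi0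
    have hi0spec : (σ ^ i0) (x : γ) ∈ Q :=
      Nat.findGreatest_spec (P := fun i => (σ ^ i) (x : γ) ∈ Q) (m := 0) (by omega) hx0
    have hi0le : i0 ≤ n - 1 := Nat.findGreatest_le _
    obtain ⟨j, hj⟩ := ih i0 (by omega) hi0spec
    refine ⟨j + 1, ?_⟩
    have e1 : ((retPerm σ Q) ^ (j + 1)) x = (retPerm σ Q) (((retPerm σ Q) ^ j) x) := by
      rw [pow_succ']; rfl
    set y := ((retPerm σ Q) ^ j) x with hy
    have hstep : ((retPerm σ Q) y : γ) = (σ ^ (n - i0)) (y : γ) := by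
      refine firstRet'_coe_eq σ Q y (by omega) ?_ ?_
      · rw [hj, ← Equiv.Perm.mul_apply, ← pow_add, show n - i0 + i0 = n by omega]
        exact hn
      · intro i h1 h2
        rw [hj, ← Equiv.Perm.mul_apply, ← pow_add]
        have hlt : Nat.findGreatest (fun i => (σ ^ i) (x : γ) ∈ Q) (n - 1) < i + i0 := by
          rw [← hi0]; omega
        exact Nat.findGreatest_is_greatest hlt (by omega)
    rw [e1, hstep, hj, ← Equiv.Perm.mul_apply, ← pow_add, show n - i0 + i0 = n by omega]

theorem retPerm_sameCycle_iff (σ : Equiv.Perm γ) (Q : Finset γ) (x y : ↥Q) :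
    (retPerm σ Q).SameCycle x y ↔ σ.SameCycle (x : γ) (y : γ) := by
  constructor
  · intro h
    have key : ∀ j : ℕ, σ.SameCycle (x : γ) ↑(((retPerm σ Q) ^ j) x) := by
      intro j
      induction j with
      | zero => simpa using Equiv.Perm.SameCycle.refl σ (x : γ)
      | succ k ih =>
        have e1 : ((retPerm σ Q) ^ (k + 1)) x = (retPerm σ Q) (((retPerm σ Q) ^ k) x) := by
          rw [pow_succ']; rfl
        obtain ⟨m, hm, heq, -⟩ := firstRet'_spec σ Q (((retPerm σ Q) ^ k) x)
        refine ih.trans ?_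
        rw [e1, retPerm_apply, ← heq]
        exact sameCycle_pow_right σ _ m
    obtain ⟨i, -, -, hieq⟩ := h.exists_pow_eq (retPerm σ Q)
    have := key i
    rwa [hieq] at this
  · intro h
    obtain ⟨n, -, -, hneq⟩ := h.exists_pow_eq σ
    obtain ⟨j, hj⟩ := retPerm_pow_surj σ Q x n (by rw [hneq]; exact y.2)
    have : ((retPerm σ Q) ^ j) x = y := Subtype.ext (by rw [hj, hneq])
    rw [← this]
    exact sameCycle_pow_right _ _ _

/-- transitivity of the first-return construction. -/
theorem rawRet_trans (σ : Equiv.Perm γ) (P Q : Finset γ) (hPQ : P ⊆ Q) :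
    ∀ (N : ℕ) (x : γ) (hxQ : x ∈ Q) (hP : ∃ m, 0 < m ∧ (σ ^ m) x ∈ P), Nat.find hP ≤ N →
      ∀ hQ' : (∃ j, 0 < j ∧ ((retPerm σ Q) ^ j) ⟨x, hxQ⟩ ∈
          (inSub Q P)),
      rawRet σ P x hP =
        ↑↑(rawRet (retPerm σ Q) (inSub Q P) ⟨x, hxQ⟩ hQ') := by
  intro N
  induction N with
  | zero =>
    intro x hxQ hP hle
    have := (Nat.find_spec hP).1
    omega
  | succ N ihN =>
    intro x hxQ hP hle hQ'
    obtain ⟨hm, hmem⟩ := Nat.find_spec hP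
    set m := Nat.find hP with hmdef
    have hminP : ∀ i, 0 < i → i < m → (σ ^ i) x ∉ P :=
      fun i a b hc => Nat.find_min hP b ⟨a, hc⟩
    have hQex : ∃ k, 0 < k ∧ (σ ^ k) x ∈ Q := ⟨m, hm, hPQ hmem⟩
    obtain ⟨hk, hkQ⟩ := Nat.find_spec hQex
    set k := Nat.find hQex with hkdef
    have hminQ : ∀ i, 0 < i → i < k → (σ ^ i) x ∉ Q :=
      fun i a b hc => Nat.find_min hQex b ⟨a, hc⟩
    have hkm : k ≤ m := Nat.find_min' hQex ⟨hm, hPQ hmem⟩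
    have hR : ((retPerm σ Q) ⟨x, hxQ⟩ : γ) = (σ ^ k) x :=
      firstRet'_coe_eq σ Q ⟨x, hxQ⟩ hk hkQ hminQ
    by_cases hwP : (σ ^ k) x ∈ P
    · have hkm' : k = m := by
        by_contra hc
        exact hminP k hk (by omega) hwP
      have hL : rawRet σ P x hP = (σ ^ m) x := rawRet_eq σ P x hP hm hmem hminP
      have hRmem : (retPerm σ Q) ⟨x, hxQ⟩ ∈ inSub Q P := by
        rw [mem_inSub, hR]; exact hwP
      have hRR : rawRet (retPerm σ Q) (inSub Q P) ⟨x, hxQ⟩ hQ'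
          = (retPerm σ Q) ⟨x, hxQ⟩ := by
        refine (rawRet_eq _ _ _ hQ' (m := 1) one_pos (by simpa using hRmem) (by omega)).trans ?_
        rw [pow_one]
      rw [hL, hRR, hR, hkm']
    · -- recurse
      have hint : ∀ i, 0 < i → i ≤ k → (σ ^ i) x ∉ P := by
        intro i h1 h2
        rcases Nat.lt_or_ge i k with hik | hik
        · exact fun hc => hminQ i h1 hik (hPQ hc)
        · have hik' : i = k := by omega
          rw [hik']; exact hwP
      have hP' := rawRet_concat_ex σ P x ⟨m, hm, hmem⟩ hk hint
      have hL1 : rawRet σ P x hP = rawRet σ P ((σ ^ k) x) hP' :=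
        rawRet_concat_eq σ P x hP hk hint hP'
      have hfind' : Nat.find hP' ≤ N := by
        have h1 : (σ ^ (m - k)) ((σ ^ k) x) ∈ P := by
          rw [← Equiv.Perm.mul_apply, ← pow_add, show m - k + k = m by omega]
          exact hmem
        have hkmlt : k < m := by
          rcases Nat.lt_or_ge k m with h | h
          · exact h
          · exfalso
            have hkm2 : k = m := by omega
            rw [hkm2] at hwP; exact hwP hmem
        have := Nat.find_min' hP' (m := m - k) ⟨by omega, h1⟩
        omega
      have hwQ : (σ ^ k) x ∈ Q := hkQ
      -- existence on the Q-level for the shifted base point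
      have hstep1 : ((retPerm σ Q) ^ 1) ⟨x, hxQ⟩ ∉ (inSub Q P) := by
        rw [pow_one, mem_inSub, hR]
        exact hwP
      have hint1 : ∀ i, 0 < i → i ≤ 1 → ((retPerm σ Q) ^ i) ⟨x, hxQ⟩ ∉
          (inSub Q P) := by
        intro i h1 h2
        have : i = 1 := by omega
        rw [this]; exact hstep1
      have hQ'' := rawRet_concat_ex (retPerm σ Q) (inSub Q P)
        ⟨x, hxQ⟩ hQ' one_pos hint1
      have hQstep : rawRet (retPerm σ Q) (inSub Q P) ⟨x, hxQ⟩ hQ'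
          = rawRet (retPerm σ Q) (inSub Q P)
              (((retPerm σ Q) ^ 1) ⟨x, hxQ⟩) hQ'' :=
        rawRet_concat_eq _ _ _ hQ' one_pos hint1 hQ''
      have hpt : ((retPerm σ Q) ^ 1) ⟨x, hxQ⟩ = (⟨(σ ^ k) x, hwQ⟩ : ↥Q) := by
        rw [pow_one]
        exact Subtype.ext hR
      have hQ3 : ∃ j, 0 < j ∧ ((retPerm σ Q) ^ j) (⟨(σ ^ k) x, hwQ⟩ : ↥Q) ∈
          (inSub Q P) := by
        rw [← hpt]
        exact hQ''
      have hIH := ihN ((σ ^ k) x) hwQ hP' hfind' hQ3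
      rw [hL1, hIH, hQstep]
      try congr 2
      try exact hpt

/-- existence at the `Q`-level from existence at the `P`-level. -/
theorem retPerm_hits (σ : Equiv.Perm γ) (P Q : Finset γ) (hPQ : P ⊆ Q) (x : γ) (hxQ : x ∈ Q)
    (hP : ∃ m, 0 < m ∧ (σ ^ m) x ∈ P) :
    ∃ j, 0 < j ∧ ((retPerm σ Q) ^ j) ⟨x, hxQ⟩ ∈ (inSub Q P) := by
  obtain ⟨m, hm, hmem⟩ := hP
  obtain ⟨j, hj⟩ := retPerm_pow_surj σ Q ⟨x, hxQ⟩ m (hPQ hmem)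
  rcases Nat.eq_zero_or_pos j with rfl | hj0
  · refine ⟨orderOf (retPerm σ Q), orderOf_pos _, ?_⟩
    rw [pow_orderOf_eq_one, mem_inSub]
    simp only [Equiv.Perm.coe_one, id_eq]
    have hx : (x : γ) = (σ ^ m) x := by simpa using hj
    show x ∈ P
    rw [hx]
    exact hmem
  · refine ⟨j, hj0, ?_⟩
    rw [mem_inSub, hj]
    exact hmem

/-- wrapper for `rawRet_trans`. -/
theorem rawRet_trans' (σ : Equiv.Perm γ) (P Q : Finset γ) (hPQ : P ⊆ Q) (z : γ) (hzQ : z ∈ Q)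
    (hzP : ∃ m, 0 < m ∧ (σ ^ m) z ∈ P)
    (hQ' : ∃ j, 0 < j ∧ ((retPerm σ Q) ^ j) ⟨z, hzQ⟩ ∈ (inSub Q P)) :
    rawRet σ P z hzP =
      ↑↑(rawRet (retPerm σ Q) (inSub Q P) ⟨z, hzQ⟩ hQ') :=
  rawRet_trans σ P Q hPQ (Nat.find hzP) z hzQ hzP le_rfl hQ'

end Ret
section Split
variable {γ : Type} [Fintype γ] [DecidableEq γ]

theorem quotMk_perm_eq_iff (π : Equiv.Perm γ) (x y : γ) :
    Quot.mk (fun u v : γ => π u = v) x = Quot.mk (fun u v : γ => π u = v) y ↔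
      π.SameCycle x y := by
  rw [Quot.eq]; exact (sameCycle_iff_eqvGen π x y).symm

/-- the forward orbit of `x` eventually enters `P`. -/
def hits (π : Equiv.Perm γ) (P : Finset γ) (x : γ) : Prop := ∃ m : ℕ, (π ^ m) x ∈ P

theorem hits_of_mem {π : Equiv.Perm γ} {P : Finset γ} {x : γ} (hx : x ∈ P) : hits π P x :=
  ⟨0, by simpa using hx⟩

theorem hits_sameCycle {π : Equiv.Perm γ} {P : Finset γ} {x y : γ} (h : π.SameCycle x y) :
    (hits π P x ↔ hits π P y) := by
  constructor
  · rintro ⟨m, hm⟩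
    obtain ⟨i, -, -, hi⟩ := h.symm.exists_pow_eq π
    exact ⟨m + i, by rw [pow_add, Equiv.Perm.mul_apply, hi]; exact hm⟩
  · rintro ⟨m, hm⟩
    obtain ⟨i, -, -, hi⟩ := h.exists_pow_eq π
    exact ⟨m + i, by rw [pow_add, Equiv.Perm.mul_apply, hi]; exact hm⟩

theorem hits_apply_iff (π : Equiv.Perm γ) (P : Finset γ) (x : γ) :
    hits π P (π x) ↔ hits π P x := by
  have h1 : π.SameCycle x (π x) := ⟨1, by simp⟩
  exact hits_sameCycle h1.symm

/-- the first entry point of the forward orbit of `x` into `P` (index `≥ 0`). -/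
noncomputable def entry (π : Equiv.Perm γ) (P : Finset γ) (x : γ) (h : hits π P x) : ↥P :=
  ⟨(π ^ Nat.find h) x, Nat.find_spec h⟩

theorem entry_mem_self {π : Equiv.Perm γ} {P : Finset γ} {x : γ} (hx : x ∈ P)
    (h : hits π P x) : entry π P x h = ⟨x, hx⟩ := by
  have h0 : Nat.find h = 0 := Nat.find_eq_zero h |>.2 (by simpa using hx)
  apply Subtype.ext
  show (π ^ Nat.find h) x = x
  rw [h0, pow_zero]; rfl

theorem entry_step {π : Equiv.Perm γ} {P : Finset γ} {x : γ} (hx : x ∉ P)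
    (h : hits π P x) (h' : hits π P (π x)) : entry π P x h = entry π P (π x) h' := by
  have hpos : 0 < Nat.find h := by
    rcases Nat.eq_zero_or_pos (Nat.find h) with h0 | h0
    · exfalso; have := Nat.find_spec h; rw [h0] at this; simp at this; exact hx this
    · exact h0
  have hle1 : Nat.find h ≤ Nat.find h' + 1 := by
    apply Nat.find_min' h
    have : (π ^ (Nat.find h' + 1)) x = (π ^ Nat.find h') (π x) := by
      rw [pow_succ]; rfl
    rw [this]; exact Nat.find_spec h'
  have hle2 : Nat.find h' ≤ Nat.find h - 1 := by
    apply Nat.find_min' h'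
    have : (π ^ (Nat.find h - 1)) (π x) = (π ^ Nat.find h) x := by
      rw [← Equiv.Perm.mul_apply, ← pow_succ, Nat.sub_add_cancel hpos]
    rw [this]; exact Nat.find_spec h
  have heq : Nat.find h = Nat.find h' + 1 := by omega
  apply Subtype.ext
  show (π ^ Nat.find h) x = (π ^ Nat.find h') (π x)
  rw [heq, pow_succ]; rfl

theorem entry_ret {π : Equiv.Perm γ} {P : Finset γ} {x : γ} (hx : x ∈ P)
    (h' : hits π P (π x)) : (entry π P (π x) h' : γ) = ↑(firstRet' π P ⟨x, hx⟩) := by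
  obtain ⟨m, hm, heq, hmin⟩ := firstRet'_spec π P ⟨x, hx⟩
  have hfind : Nat.find h' = m - 1 := by
    have hle1 : Nat.find h' ≤ m - 1 := by
      apply Nat.find_min' h'
      have e : (π ^ (m - 1)) (π x) = (π ^ m) x := by
        rw [← Equiv.Perm.mul_apply, ← pow_succ, Nat.sub_add_cancel hm]
      rw [e, heq]
      exact (firstRet' π P ⟨x, hx⟩).2
    have hle2 : ¬ (Nat.find h' < m - 1) := by
      intro hc
      have hspec := Nat.find_spec h'
      have e : (π ^ Nat.find h') (π x) = (π ^ (Nat.find h' + 1)) x := by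
        rw [pow_succ]; rfl
      rw [e] at hspec
      exact hmin (Nat.find h' + 1) (by omega) (by omega) hspec
    omega
  show (π ^ Nat.find h') (π x) = _
  have e : (π ^ Nat.find h') (π x) = (π ^ (Nat.find h' + 1)) x := by rw [pow_succ]; rfl
  rw [e, hfind, Nat.sub_add_cancel hm, heq]

/-- the global relation of the splitting lemma. -/
def glrel (π : Equiv.Perm γ) (P : Finset γ) (s : ↥P → ↥P → Prop) : γ → γ → Prop :=
  fun x y => π x = y ∨ ∃ (hx : x ∈ P) (hy : y ∈ P), s ⟨x, hx⟩ ⟨y, hy⟩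

/-- the local relation of the splitting lemma. -/
def locrel (π : Equiv.Perm γ) (P : Finset γ) (s : ↥P → ↥P → Prop) : ↥P → ↥P → Prop :=
  fun x y => firstRet' π P x = y ∨ s x y

/-- the isolated orbits. -/
def isoSet (π : Equiv.Perm γ) (P : Finset γ) : Type :=
  {z : Quot (fun x y : γ => π x = y) // ∀ c, Quot.mk _ c = z → c ∉ P}

instance (π : Equiv.Perm γ) (P : Finset γ) : Finite (isoSet π P) := by
  unfold isoSet; infer_instance

theorem quotMk_glrel_pow (π : Equiv.Perm γ) (P : Finset γ) (s : ↥P → ↥P → Prop) (m : ℕ)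
    (x : γ) : Quot.mk (glrel π P s) ((π ^ m) x) = Quot.mk (glrel π P s) x := by
  induction m with
  | zero => simp
  | succ k ih =>
    have h1 : Quot.mk (glrel π P s) ((π ^ k) x) = Quot.mk (glrel π P s) ((π ^ (k+1)) x) := by
      apply Quot.sound
      left
      rw [pow_succ']; rfl
  
    rw [← h1, ih]

theorem quotMk_prel_pow (π : Equiv.Perm γ) (m : ℕ) (x : γ) :
    Quot.mk (fun x y : γ => π x = y) ((π ^ m) x) = Quot.mk (fun x y : γ => π x = y) x := by
  induction m with
  | zero => simp
  | succ k ih =>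
    have h1 : Quot.mk (fun x y : γ => π x = y) ((π ^ k) x)
        = Quot.mk (fun x y : γ => π x = y) ((π ^ (k+1)) x) := by
      apply Quot.sound
      rw [pow_succ']; rfl
    rw [← h1, ih]

open Classical in
/-- forward map for the orbit-splitting bijection. -/
noncomputable def splitF (π : Equiv.Perm γ) (P : Finset γ) (s : ↥P → ↥P → Prop) (x : γ) :
    Quot (locrel π P s) ⊕ isoSet π P :=
  if h : hits π P x then Sum.inl (Quot.mk _ (entry π P x h))
  else Sum.inr ⟨Quot.mk _ x, fun c hc hcP =>
    h ((hits_sameCycle ((quotMk_perm_eq_iff π c x).1 hc)).1 (hits_of_mem hcP))⟩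

/-- backward map for the orbit-splitting bijection. -/
noncomputable def splitG (π : Equiv.Perm γ) (P : Finset γ) (s : ↥P → ↥P → Prop) :
    (Quot (locrel π P s) ⊕ isoSet π P) → Quot (glrel π P s) :=
  Sum.elim
    (Quot.lift (fun x : ↥P => Quot.mk _ (x : γ)) (by
      intro x y hxy
      show Quot.mk (glrel π P s) (x : γ) = Quot.mk (glrel π P s) (y : γ)
      rcases hxy with hxy | hxy
      · obtain ⟨m, hm, heq, -⟩ := firstRet'_spec π P x
        rw [← hxy, ← heq, quotMk_glrel_pow]
      · exact Quot.sound (Or.inr ⟨x.2, y.2, hxy⟩)))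
    (fun z => Quot.lift (Quot.mk _) (fun a b hab => Quot.sound (Or.inl hab)) z.1)

theorem splitF_respects (π : Equiv.Perm γ) (P : Finset γ) (s : ↥P → ↥P → Prop) :
    ∀ x y, glrel π P s x y → splitF π P s x = splitF π P s y := by
  classical
  intro x y hxy
  rcases hxy with hxy | ⟨hx, hy, hs⟩
  · subst hxy
    by_cases h : hits π P x
    · have h' : hits π P (π x) := (hits_apply_iff π P x).2 h
      rw [splitF, splitF, dif_pos h, dif_pos h']
      congr 1
      by_cases hxP : x ∈ P
      · rw [entry_mem_self hxP h]
        have e1 : entry π P (π x) h' = firstRet' π P ⟨x, hxP⟩ :=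
          Subtype.ext (entry_ret hxP h')
        rw [e1]
        exact Quot.sound (Or.inl rfl)
      · rw [entry_step hxP h h']
    · have h' : ¬ hits π P (π x) := fun hc => h ((hits_apply_iff π P x).1 hc)
      rw [splitF, splitF, dif_neg h, dif_neg h']
      congr 1
      exact Subtype.ext (Quot.sound rfl)
  · have h : hits π P x := hits_of_mem hx
    have h' : hits π P y := hits_of_mem hy
    rw [splitF, splitF, dif_pos h, dif_pos h']
    congr 1
    rw [entry_mem_self hx h, entry_mem_self hy h']
    exact Quot.sound (Or.inr hs)

theorem split_card (π : Equiv.Perm γ) (P : Finset γ) (s : ↥P → ↥P → Prop) :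
    Nat.card (Quot (glrel π P s)) = Nat.card (Quot (locrel π P s)) + Nat.card (isoSet π P) := by
  classical
  let Fb : Quot (glrel π P s) → (Quot (locrel π P s) ⊕ isoSet π P) :=
    Quot.lift (splitF π P s) (splitF_respects π P s)
  have hGF : ∀ q, splitG π P s (Fb q) = q := by
    intro q
    induction q using Quot.ind with | _ x =>
    show splitG π P s (splitF π P s x) = Quot.mk _ x
    by_cases h : hits π P x
    · rw [splitF, dif_pos h]
      show Quot.mk (glrel π P s) ((entry π P x h : γ)) = Quot.mk _ x
      show Quot.mk (glrel π P s) ((π ^ Nat.find h) x) = Quot.mk _ x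
      exact quotMk_glrel_pow π P s _ x
    · rw [splitF, dif_neg h]
      rfl
  have hFG : ∀ z, Fb (splitG π P s z) = z := by
    intro z
    rcases z with q | z
    · induction q using Quot.ind with | _ x =>
      show Fb (Quot.mk _ (x : γ)) = Sum.inl (Quot.mk _ x)
      show splitF π P s (x : γ) = Sum.inl (Quot.mk _ x)
      have h : hits π P (x : γ) := hits_of_mem x.2
      rw [splitF, dif_pos h, entry_mem_self x.2 h]
    · obtain ⟨q, hz⟩ := z
      induction q using Quot.ind with | _ c =>
      show Fb (Quot.mk _ c) = Sum.inr ⟨Quot.mk _ c, hz⟩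
      show splitF π P s c = Sum.inr ⟨Quot.mk _ c, hz⟩
      have h : ¬ hits π P c := by
        rintro ⟨m, hm⟩
        exact hz ((π ^ m) c) (quotMk_prel_pow π m c) hm
      rw [splitF, dif_neg h]
  have e : Quot (glrel π P s) ≃ (Quot (locrel π P s) ⊕ isoSet π P) :=
    ⟨Fb, splitG π P s, hGF, hFG⟩
  rw [Nat.card_congr e, Nat.card_sum]

/-- isolated-orbit count only depends on the permutation inside the complement. -/
theorem iso_congr (π π' : Equiv.Perm γ) (T : Finset γ) (hagree : ∀ u, u ∉ T → π u = π' u) :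
    Nat.card (isoSet π T) = Nat.card (isoSet π' T) := by
  classical
  -- transfer of cycles on avoiding orbits
  have key : ∀ (ρ ρ' : Equiv.Perm γ), (∀ u, u ∉ T → ρ u = ρ' u) →
      ∀ c : γ, (∀ x, ρ.SameCycle c x → x ∉ T) →
      (∀ i : ℕ, (ρ ^ i) c = (ρ' ^ i) c) := by
    intro ρ ρ' hag c hc i
    induction i with
    | zero => rfl
    | succ k ih =>
      have h1 : (ρ ^ k) c ∉ T := hc _ (sameCycle_pow_right ρ c k)
      have e1 : (ρ ^ (k+1)) c = ρ ((ρ ^ k) c) := by rw [pow_succ']; rfl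
      have e2 : (ρ' ^ (k+1)) c = ρ' ((ρ' ^ k) c) := by rw [pow_succ']; rfl
      rw [e1, e2, ← ih, hag _ h1]
  have transfer : ∀ (ρ ρ' : Equiv.Perm γ), (∀ u, u ∉ T → ρ u = ρ' u) →
      ∀ c : γ, (∀ x, ρ.SameCycle c x → x ∉ T) →
      (∀ x, ρ'.SameCycle c x → ρ.SameCycle c x) ∧ (∀ x, ρ.SameCycle c x → ρ'.SameCycle c x) := by
    intro ρ ρ' hag c hc
    constructor
    · intro x hx
      obtain ⟨i, -, -, hi⟩ := hx.exists_pow_eq ρ'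
      rw [← hi, ← key ρ ρ' hag c hc i]
      exact sameCycle_pow_right ρ c i
    · intro x hx
      obtain ⟨i, -, -, hi⟩ := hx.exists_pow_eq ρ
      rw [← hi, key ρ ρ' hag c hc i]
      exact sameCycle_pow_right ρ' c i
  have hagree' : ∀ u, u ∉ T → π' u = π u := fun u hu => (hagree u hu).symm
  -- translate the avoidance condition
  have avoidIff : ∀ (ρ : Equiv.Perm γ) (c : γ),
      ((∀ x, Quot.mk (fun u v : γ => ρ u = v) x = Quot.mk _ c → x ∉ T) ↔
        (∀ x, ρ.SameCycle c x → x ∉ T)) := by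
    intro ρ c
    constructor
    · intro h x hx
      exact h x ((quotMk_perm_eq_iff ρ x c).2 hx.symm)
    · intro h x hx
      exact h x ((quotMk_perm_eq_iff ρ x c).1 hx).symm
  -- the map
  have mkmap : ∀ z : isoSet π T, ∃ c : γ, Quot.mk _ c = z.1 := fun z => Quot.exists_rep z.1
  let F : isoSet π T → isoSet π' T := fun z =>
    ⟨Quot.mk _ (mkmap z).choose, by
      have hrep := (mkmap z).choose_spec
      set c := (mkmap z).choose
      have hcav : ∀ x, π.SameCycle c x → x ∉ T := by
        rw [← avoidIff]
        intro x hx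
        exact z.2 x (by rw [hx, hrep])
      have hcav' : ∀ x, π'.SameCycle c x → x ∉ T :=
        fun x hx => hcav x ((transfer π π' hagree c hcav).1 x hx)
      intro x hx
      exact hcav' x ((quotMk_perm_eq_iff π' x c).1 hx).symm⟩
  have hFinj : Function.Injective F := by
    intro z w hF
    have hrz := (mkmap z).choose_spec
    have hrw := (mkmap w).choose_spec
    set cz := (mkmap z).choose
    set cw := (mkmap w).choose
    have h1 : π'.SameCycle cz cw := by
      have := congrArg Subtype.val hF
      exact (quotMk_perm_eq_iff π' cz cw).1 this
    have hwav : ∀ x, π.SameCycle cw x → x ∉ T := by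
      rw [← avoidIff]
      intro x hx
      exact w.2 x (by rw [hx, hrw])
    have h2 : π.SameCycle cw cz := (transfer π π' hagree cw hwav).1 cz h1.symm
    have h3 : z.1 = w.1 := by
      rw [← hrz, ← hrw]
      exact (quotMk_perm_eq_iff π cz cw).2 h2.symm
    exact Subtype.ext h3
  have hFsurj : Function.Surjective F := by
    intro w
    obtain ⟨c, hc⟩ := Quot.exists_rep w.1
    have hcav' : ∀ x, π'.SameCycle c x → x ∉ T := by
      rw [← avoidIff]
      intro x hx
      exact w.2 x (by rw [hx, hc])
    have hcav : ∀ x, π.SameCycle c x → x ∉ T :=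
      fun x hx => hcav' x ((transfer π' π hagree' c hcav').1 x hx)
    refine ⟨⟨Quot.mk _ c, ?_⟩, ?_⟩
    · intro x hx
      exact hcav x ((quotMk_perm_eq_iff π x c).1 hx).symm
    · set z : isoSet π T := ⟨Quot.mk _ c, _⟩
      have hrz := (mkmap z).choose_spec
      set d := (mkmap z).choose
      have h1 : π.SameCycle d c := (quotMk_perm_eq_iff π d c).1 hrz
      have h2 : π'.SameCycle c d := (transfer π π' hagree c hcav).2 d h1.symm
      apply Subtype.ext
      show Quot.mk _ d = w.1
      rw [← hc]
      exact (quotMk_perm_eq_iff π' d c).2 h2.symm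
  exact Nat.card_congr (Equiv.ofBijective F ⟨hFinj, hFsurj⟩)

end Split
section Conj

theorem quotCard_conj {γ δ : Type} (e : γ ≃ δ) (f : γ → γ) (g : δ → δ)
    (h : ∀ x, e (f x) = g (e x)) :
    Nat.card (Quot (fun x y : γ => f x = y)) = Nat.card (Quot (fun x y : δ => g x = y)) := by
  have h' : ∀ x, e.symm (g x) = f (e.symm x) := by
    intro x
    apply e.injective
    rw [h, e.apply_symm_apply, e.apply_symm_apply]
  refine Nat.card_congr
    ⟨Quot.lift (fun x => Quot.mk _ (e x)) ?_, Quot.lift (fun x => Quot.mk _ (e.symm x)) ?_,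
      ?_, ?_⟩
  · intro x y hxy
    apply Quot.sound
    show g (e x) = e y
    rw [← h, hxy]
  · intro x y hxy
    apply Quot.sound
    show f (e.symm x) = e.symm y
    rw [← h', hxy]
  · intro q
    induction q using Quot.ind with | _ x =>
    show Quot.mk _ (e.symm (e x)) = Quot.mk _ x
    rw [e.symm_apply_apply]
  · intro q
    induction q using Quot.ind with | _ x =>
    show Quot.mk _ (e (e.symm x)) = Quot.mk _ x
    rw [e.apply_symm_apply]

/-- `split_card` with no extra relation. -/
theorem split_card0 {γ : Type} [Fintype γ] [DecidableEq γ] (π : Equiv.Perm γ) (P : Finset γ) :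
    Nat.card (Quot (fun x y : γ => π x = y))
      = Nat.card (Quot (fun x y : ↥P => firstRet' π P x = y)) + Nat.card (isoSet π P) := by
  have h := split_card π P (fun _ _ => False)
  rw [quotCard_congr (r' := glrel π P (fun _ _ => False))
      (fun x y => by simp [glrel]),
    quotCard_congr (r := fun x y : ↥P => firstRet' π P x = y)
      (r' := locrel π P (fun _ _ => False)) (fun x y => by simp [locrel])]
  exact h

end Conj

section RGL

variable {B : Type} [Fintype B] [DecidableEq B]

theorem firstRet_eq' (σ : Equiv.Perm B) (P : Finset B) (b : ↥P) :
    firstRet σ P b = firstRet' σ P b := rfl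

/-- the global component relation of an `RG`. -/
def glob (σ₀ σ₁ : Equiv.Perm B) (T : Finset B) : B → B → Prop :=
  fun x y => σ₀ x = y ∨ (x ∈ T ∧ σ₁ x = y)

namespace RG

/-- the edge involution as a permutation of the active half-edges. -/
def ret1Perm (K : RG B) : Equiv.Perm ↥K.act :=
  Function.Involutive.toPerm (fun x => (⟨K.s1 ↑x, K.closed _ x.2⟩ : ↥K.act))
    (fun x => Subtype.ext (K.invol ↑x))

/-- the face permutation. -/
noncomputable def faceP (K : RG B) : Equiv.Perm ↥K.act :=
  retPerm K.s0 K.act * K.ret1Perm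

theorem numK_eq_glob (K : RG B) : K.numK = Nat.card (Quot (glob K.s0 K.s1 K.act)) := by
  have h := split_card K.s0 K.act (fun x y : ↥K.act => K.s1 ↑x = ↑y)
  have h1 : Nat.card (Quot (glob K.s0 K.s1 K.act))
      = Nat.card (Quot (glrel K.s0 K.act (fun x y : ↥K.act => K.s1 ↑x = ↑y))) := by
    refine quotCard_congr fun x y => ?_
    unfold glob glrel
    constructor
    · rintro (h | ⟨hx, hy⟩)
      · exact Or.inl h
      · exact Or.inr ⟨hx, by rw [← hy]; exact K.closed x hx, hy⟩
    · rintro (h | ⟨hx, hy, hs⟩)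
      · exact Or.inl h
      · exact Or.inr ⟨hx, hs⟩
  have h2 : K.numK = Nat.card (Quot (locrel K.s0 K.act (fun x y : ↥K.act => K.s1 ↑x = ↑y)))
      + Nat.card (isoSet K.s0 K.act) := by
    show orbCount _ + K.isolated = _
    have e1 : orbCount (fun a b : ↥K.act => K.ret0 a = b ∨ K.ret1 a = b)
        = Nat.card (Quot (locrel K.s0 K.act (fun x y : ↥K.act => K.s1 ↑x = ↑y))) := by
      refine quotCard_congr fun x y => ?_
      unfold locrel
      constructor
      · rintro (h | h)
        · exact Or.inl h
        · exact Or.inr (congrArg Subtype.val h)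
      · rintro (h | h)
        · exact Or.inl h
        · exact Or.inr (Subtype.ext h)
    have e2 : K.isolated = Nat.card (isoSet K.s0 K.act) := rfl
    rw [e1, e2]
  rw [h2, h1, h]

theorem numV_eq (K : RG B) : K.numV = Nat.card (Quot (fun x y : B => K.s0 x = y)) := rfl

theorem numF_eq (K : RG B) :
    K.numF = Nat.card (Quot (fun x y : ↥K.act => K.faceP x = y))
      + Nat.card (isoSet K.s0 K.act) := by
  show orbCount _ + K.isolated = _
  have e1 : orbCount (fun a b : ↥K.act => K.ret0 (K.ret1 a) = b)
      = Nat.card (Quot (fun x y : ↥K.act => K.faceP x = y)) :=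
    quotCard_congr fun x y => Iff.rfl
  rw [e1]
  rfl

/-- monotonicity: a spanning subgraph has at least as many components. -/
theorem numK_mono (K L : RG B) (h0 : K.s0 = L.s0) (h1 : K.s1 = L.s1) (hact : K.act ⊆ L.act) :
    L.numK ≤ K.numK := by
  rw [numK_eq_glob, numK_eq_glob, h0, h1]
  refine quotCard_le fun x y hxy => ?_
  unfold glob at hxy ⊢
  rcases hxy with h | ⟨hx, hy⟩
  · exact Or.inl h
  · exact Or.inr ⟨hact hx, hy⟩

end RG

end RGL
section KLemmas

variable {B : Type} [Fintype B] [DecidableEq B]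

namespace RG

theorem glob_glue_iff (K : RG B) (a : B) (ha : a ∈ K.act) (x y : B) :
    glob K.s0 K.s1 K.act x y ↔
      glueRel (glob K.s0 K.s1 (K.act \ {a, K.s1 a})) a (K.s1 a) x y := by
  have hbact : K.s1 a ∈ K.act := K.closed a ha
  unfold glob glueRel
  constructor
  · rintro (h | ⟨hx, hy⟩)
    · exact Or.inl (Or.inl h)
    · by_cases h1 : x = a
      · subst h1; exact Or.inr (Or.inl ⟨rfl, hy.symm⟩)
      by_cases h2 : x = K.s1 a
      · refine Or.inr (Or.inr ⟨h2, ?_⟩)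
        rw [← hy, h2, K.invol]
      · refine Or.inl (Or.inr ⟨?_, hy⟩)
        rw [Finset.mem_sdiff]
        refine ⟨hx, ?_⟩
        simp only [Finset.mem_insert, Finset.mem_singleton]
        push_neg
        exact ⟨h1, h2⟩
  · rintro ((h | ⟨hx, hy⟩) | ⟨hx3, hy3⟩ | ⟨hx4, hy4⟩)
    · exact Or.inl h
    · exact Or.inr ⟨(Finset.mem_sdiff.1 hx).1, hy⟩
    · rw [hx3, hy3]; exact Or.inr ⟨ha, rfl⟩
    · rw [hx4, hy4]; exact Or.inr ⟨hbact, K.invol a⟩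

theorem del_numK_add (K : RG B) (a : B) (ha : a ∈ K.act)
    (hBR : ¬ Relation.EqvGen (glob K.s0 K.s1 (K.act \ {a, K.s1 a})) a (K.s1 a)) :
    (K.del a).numK = K.numK + 1 := by
  have h1 : (K.del a).numK = Nat.card (Quot (glob K.s0 K.s1 (K.act \ {a, K.s1 a}))) :=
    numK_eq_glob (K.del a)
  have h2 : K.numK = Nat.card (Quot (glob K.s0 K.s1 K.act)) := numK_eq_glob K
  rw [h1, h2, quotCard_congr (glob_glue_iff K a ha)]
  exact quotCard_glue_of_not hBR

theorem del_numK_eq (K : RG B) (a : B) (ha : a ∈ K.act)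
    (hEq : Relation.EqvGen (glob K.s0 K.s1 (K.act \ {a, K.s1 a})) a (K.s1 a)) :
    (K.del a).numK = K.numK := by
  have h1 : (K.del a).numK = Nat.card (Quot (glob K.s0 K.s1 (K.act \ {a, K.s1 a}))) :=
    numK_eq_glob (K.del a)
  have h2 : K.numK = Nat.card (Quot (glob K.s0 K.s1 K.act)) := numK_eq_glob K
  rw [h1, h2, quotCard_congr (glob_glue_iff K a ha)]
  exact (quotCard_glue_of_eqvGen hEq).symm

theorem contr_numK (K : RG B) (a : B) (ha : a ∈ K.act)
    (hNL : ¬ K.s0.SameCycle a (K.s1 a)) :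
    (K.contr a).numK = K.numK := by
  set b := K.s1 a with hb
  have hbact : b ∈ K.act := K.closed a ha
  set τ := K.s0 * Equiv.swap a b with hτ
  have h1 : (K.contr a).numK = Nat.card (Quot (glob τ K.s1 (K.act \ {a, b}))) :=
    numK_eq_glob (K.contr a)
  have h2 : K.numK = Nat.card (Quot (glob K.s0 K.s1 K.act)) := numK_eq_glob K
  rw [h1, h2]
  apply quotCard_eq_of_eqvGen
  intro x y
  have hτa : τ a = K.s0 b := by rw [hτ]; simp
  have hτb : τ b = K.s0 a := by rw [hτ]; simp
  have hτu : ∀ u, u ≠ a → u ≠ b → τ u = K.s0 u := fun u h1 h2 => by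
    rw [hτ]; simp [Equiv.swap_apply_of_ne_of_ne h1 h2]
  have hba : K.s1 b = a := K.invol a
  set P := K.act \ {a, b} with hP
  set r1 := glob τ K.s1 P with hr1
  set r2 := glob K.s0 K.s1 K.act with hr2
  have gτ : ∀ u, Relation.EqvGen r1 u (τ u) := fun u => Relation.EqvGen.rel _ _ (Or.inl rfl)
  have hlift : ∀ {x y : B}, Relation.EqvGen (fun x y => τ x = y) x y → Relation.EqvGen r1 x y :=
    fun hxy => eqvGen_closure (fun u v huv => Relation.EqvGen.rel _ _ (Or.inl huv)) hxy
  have aroundB : Relation.EqvGen r1 (K.s0 b) b := by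
    refine hlift (eqvGen_around K.s0 τ b ?_)
    intro u hu hne
    refine hτu u ?_ hne
    intro hc; rw [hc] at hu; exact hNL hu.symm
  have aroundA : Relation.EqvGen r1 (K.s0 a) a := by
    refine hlift (eqvGen_around K.s0 τ a ?_)
    intro u hu hne
    refine hτu u hne ?_
    intro hc; rw [hc] at hu; exact hNL hu
  have hA : Relation.EqvGen r1 a (K.s0 b) := hτa ▸ gτ a
  have hB : Relation.EqvGen r1 b (K.s0 a) := hτb ▸ gτ b
  have hab1 : Relation.EqvGen r1 a b := hA.trans _ _ _ aroundB
  have hsa : Relation.EqvGen r1 a (K.s0 a) := hab1.trans _ _ _ hB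
  have hsb : Relation.EqvGen r1 b (K.s0 b) := (hab1.symm _ _).trans _ _ _ hA
  constructor
  · refine eqvGen_closure fun u v huv => ?_
    rcases huv with huv | ⟨hu, hv⟩
    · rw [← huv]
      by_cases h1 : u = a
      · rw [h1, hτa]
        exact (Relation.EqvGen.rel a b (Or.inr ⟨ha, hb.symm⟩)).trans _ _ _
          (Relation.EqvGen.rel _ _ (Or.inl rfl))
      by_cases h2 : u = b
      · rw [h2, hτb]
        exact (Relation.EqvGen.rel b a (Or.inr ⟨hbact, hba⟩)).trans _ _ _
          (Relation.EqvGen.rel _ _ (Or.inl rfl))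
      · rw [hτu u h1 h2]
        exact Relation.EqvGen.rel _ _ (Or.inl rfl)
    · exact Relation.EqvGen.rel _ _ (Or.inr ⟨(Finset.mem_sdiff.1 hu).1, hv⟩)
  · refine eqvGen_closure fun u v huv => ?_
    rcases huv with huv | ⟨hu, hv⟩
    · rw [← huv]
      by_cases h1 : u = a
      · rw [h1]; exact hsa
      by_cases h2 : u = b
      · rw [h2]; exact hsb
      · rw [← hτu u h1 h2]; exact gτ u
    · by_cases h1 : u = a
      · rw [h1] at hv ⊢
        rw [← hv, ← hb]
        exact hab1
      by_cases h2 : u = b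
      · rw [h2] at hv ⊢
        rw [← hv, hba]
        exact hab1.symm _ _
      · refine Relation.EqvGen.rel _ _ (Or.inr ⟨?_, hv⟩)
        rw [hP, Finset.mem_sdiff]
        refine ⟨hu, ?_⟩
        simp only [Finset.mem_insert, Finset.mem_singleton]
        push_neg
        exact ⟨h1, h2⟩
  
theorem contr_numV (K : RG B) (a : B) (hNL : ¬ K.s0.SameCycle a (K.s1 a)) :
    K.numV = (K.contr a).numV + 1 :=
  swap_merge_card K.s0 hNL

theorem face_sameCycle (K : RG B) (a : B) (ha : a ∈ K.act)
    (hBR : ¬ Relation.EqvGen (glob K.s0 K.s1 (K.act \ {a, K.s1 a})) a (K.s1 a)) :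
    K.faceP.SameCycle ⟨a, ha⟩ ⟨K.s1 a, K.closed a ha⟩ := by
  classical
  set b := K.s1 a with hb
  have hbact : b ∈ K.act := K.closed a ha
  set P := K.act \ {a, b} with hP
  set dgl := glob K.s0 K.s1 P with hdgl
  set φ := K.faceP with hφ
  set A : ↥K.act := (⟨a, ha⟩ : ↥K.act) with hA
  set Bq : ↥K.act := (⟨b, hbact⟩ : ↥K.act) with hBq
  have hpow : ∀ (u : B) (m : ℕ), Relation.EqvGen dgl u ((K.s0 ^ m) u) := by
    intro u m
    refine eqvGen_closure (r := fun x y => K.s0 x = y) ?_ (eqvGen_perm_pow K.s0 u m)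
    exact fun x y hxy => Relation.EqvGen.rel _ _ (Or.inl hxy)
  have hretstep : ∀ y : ↥K.act, Relation.EqvGen dgl (y : B) ↑(retPerm K.s0 K.act y) := by
    intro y
    obtain ⟨m, hm, heq, -⟩ := firstRet'_spec K.s0 K.act y
    show Relation.EqvGen dgl (y : B) ↑(firstRet' K.s0 K.act y)
    rw [← heq]
    exact hpow ↑y m
  have hstep : ∀ x : ↥K.act, x ≠ A → x ≠ Bq →
      (Relation.EqvGen dgl ((φ x : B)) b ↔ Relation.EqvGen dgl (x : B) b) := by
    intro x h1 h2
    have hxP : (x : B) ∈ P := by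
      rw [hP, Finset.mem_sdiff]
      refine ⟨x.2, ?_⟩
      simp only [Finset.mem_insert, Finset.mem_singleton]
      push_neg
      constructor
      · intro hc; exact h1 (Subtype.ext hc)
      · intro hc; exact h2 (Subtype.ext hc)
    have c1 : Relation.EqvGen dgl (x : B) ↑(K.ret1Perm x) :=
      Relation.EqvGen.rel _ _ (Or.inr ⟨hxP, rfl⟩)
    have c2 : Relation.EqvGen dgl ↑(K.ret1Perm x) ((φ x : B)) := hretstep (K.ret1Perm x)
    have c3 := c1.trans _ _ _ c2
    constructor
    · intro h; exact c3.trans _ _ _ h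
    · intro h; exact (c3.symm _ _).trans _ _ _ h
  have hι : K.ret1Perm A = Bq := Subtype.ext rfl
  have hφA : Relation.EqvGen dgl ((φ A : B)) b := by
    have e2 : φ A = retPerm K.s0 K.act Bq := by
      show retPerm K.s0 K.act (K.ret1Perm A) = _
      rw [hι]
    rw [e2]
    exact (hretstep Bq).symm _ _
  by_contra hnot
  have hnotpow : ∀ j : ℕ, (φ ^ j) A ≠ Bq := by
    intro j hc
    exact hnot (by rw [← hc]; exact sameCycle_pow_right φ A j)
  have hexA : ∃ n, 0 < n ∧ (φ ^ n) A = A :=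
    ⟨orderOf φ, orderOf_pos φ, by rw [pow_orderOf_eq_one]; rfl⟩
  obtain ⟨hnpos, hnA⟩ := Nat.find_spec hexA
  set n := Nat.find hexA with hn
  have claim : ∀ k, 1 ≤ k → k ≤ n → Relation.EqvGen dgl (((φ ^ k) A : B)) b := by
    intro k hk1
    induction k, hk1 using Nat.le_induction with
    | base =>
      intro _
      have e : (φ ^ 1) A = φ A := pow_one φ ▸ rfl
      rw [e]
      exact hφA
    | succ j hj ih =>
      intro hkn
      have ihj := ih (by omega)
      have hxB : (φ ^ j) A ≠ Bq := hnotpow j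
      have hxA : (φ ^ j) A ≠ A := by
        intro hc
        exact Nat.find_min hexA (m := j) (by omega) ⟨by omega, hc⟩
      have e : (φ ^ (j + 1)) A = φ ((φ ^ j) A) := by rw [pow_succ']; rfl
      rw [e]
      exact (hstep ((φ ^ j) A) hxA hxB).2 ihj
  have hfinal := claim n hnpos le_rfl
  rw [hnA] at hfinal
  exact hBR hfinal

end RG

end KLemmas
section FaceLemmas

variable {B : Type} [Fintype B] [DecidableEq B]

namespace RG

theorem contr_del_numF (K : RG B) (a : B) (ha : a ∈ K.act)
    (hNL : ¬ K.s0.SameCycle a (K.s1 a)) :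
    (K.contr a).numF = K.numF ∧
      (¬ Relation.EqvGen (glob K.s0 K.s1 (K.act \ {a, K.s1 a})) a (K.s1 a) →
        (K.del a).numF = K.numF + 1) := by
  classical
  set b := K.s1 a with hbdef
  have hbact : b ∈ K.act := K.closed a ha
  have hanb : a ≠ b := Ne.symm (K.fpf a ha)
  set Q := K.act with hQdef
  set P := Q \ {a, b} with hPdef
  have hPQ : P ⊆ Q := Finset.sdiff_subset
  have hmemP : ∀ x, x ∈ P ↔ (x ∈ Q ∧ x ≠ a ∧ x ≠ b) := by
    intro x
    rw [hPdef, Finset.mem_sdiff]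
    simp only [Finset.mem_insert, Finset.mem_singleton]
    constructor
    · rintro ⟨h1, h2⟩
      push_neg at h2
      exact ⟨h1, h2⟩
    · rintro ⟨h1, h2, h3⟩
      exact ⟨h1, by push_neg; exact ⟨h2, h3⟩⟩
  have haQ : a ∈ Q := ha
  have hbQ : b ∈ Q := hbact
  have hPa : a ∉ P := fun hc => ((hmemP a).1 hc).2.1 rfl
  have hPb : b ∉ P := fun hc => ((hmemP b).1 hc).2.2 rfl
  have hPs1 : ∀ x ∈ P, K.s1 x ∈ P := fun x hx => (K.del a).closed x hx
  set A : ↥Q := (⟨a, haQ⟩ : ↥Q) with hAdef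
  set Bq : ↥Q := (⟨b, hbQ⟩ : ↥Q) with hBqdef
  have hABne : A ≠ Bq := fun hc => hanb (congrArg Subtype.val hc)
  set τ := K.s0 * Equiv.swap a b with hτdef
  have hτu : ∀ u, u ≠ a → u ≠ b → τ u = K.s0 u := fun u h1 h2 => by
    rw [hτdef]; simp [Equiv.swap_apply_of_ne_of_ne h1 h2]
  set R := retPerm K.s0 Q with hRdef
  set ι := K.ret1Perm with hιdef
  set φ := K.faceP with hφdef
  set sQ := Equiv.swap A Bq with hsQdef
  set P'' := inSub Q P with hP''def
  have coe_swap : ∀ z : ↥Q, ((sQ z : ↥Q) : B) = Equiv.swap a b (z : B) := by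
    intro z
    by_cases h1 : z = A
    · rw [h1, hsQdef, Equiv.swap_apply_left]
      show (b : B) = Equiv.swap a b a
      rw [Equiv.swap_apply_left]
    by_cases h2 : z = Bq
    · rw [h2, hsQdef, Equiv.swap_apply_right]
      show (a : B) = Equiv.swap a b b
      rw [Equiv.swap_apply_right]
    · have hza : (z : B) ≠ a := fun hc => h1 (Subtype.ext hc)
      have hzb : (z : B) ≠ b := fun hc => h2 (Subtype.ext hc)
      rw [hsQdef, Equiv.swap_apply_of_ne_of_ne h1 h2, Equiv.swap_apply_of_ne_of_ne hza hzb]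
  have hRs : retPerm τ Q = R * sQ := by
    apply Equiv.ext
    intro z
    apply Subtype.ext
    show (firstRet' τ Q z : B) = ((R (sQ z) : ↥Q) : B)
    have h5 : ((R (sQ z) : ↥Q) : B) = ↑(firstRet' K.s0 Q (sQ z)) := rfl
    rw [h5]
    refine firstRet_sim τ K.s0 Q ?_ z (sQ z) ?_
    · intro u hu
      have h1 : u ≠ a := fun hc => hu (hc ▸ haQ)
      have h2 : u ≠ b := fun hc => hu (hc ▸ hbQ)
      exact hτu u h1 h2
    · show τ (z : B) = K.s0 ↑(sQ z)
      rw [coe_swap, hτdef]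
      rfl
  have hout2 : ∀ u : ↥Q, u ∉ P'' → u = A ∨ u = Bq := by
    intro u hu
    rw [hP''def, mem_inSub] at hu
    by_cases h1 : (u : B) = a
    · exact Or.inl (Subtype.ext h1)
    by_cases h2 : (u : B) = b
    · exact Or.inr (Subtype.ext h2)
    · exact absurd ((hmemP ↑u).2 ⟨u.2, h1, h2⟩) hu
  have hmem'' : ∀ x : ↥Q, (x : B) ∈ P → x ∈ P'' := fun x hx => by
    rw [hP''def, mem_inSub]; exact hx
  have hιA : ι A = Bq := Subtype.ext rfl
  have hιB : ι Bq = A := Subtype.ext (K.invol a)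
  have hsQA : sQ A = Bq := by rw [hsQdef]; exact Equiv.swap_apply_left A Bq
  have hsQB : sQ Bq = A := by rw [hsQdef]; exact Equiv.swap_apply_right A Bq
  have hout_φRs : ∀ u : ↥Q, u ∉ P'' → φ u = (R * sQ) u := by
    intro u hu
    rcases hout2 u hu with h | h
    · rw [h]
      show R (ι A) = R (sQ A)
      rw [hιA, hsQA]
    · rw [h]
      show R (ι Bq) = R (sQ Bq)
      rw [hιB, hsQB]
  have hout_φsR : ∀ u : ↥Q, u ∉ P'' → (φ * sQ) u = R u := by
    intro u hu
    rcases hout2 u hu with h | h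
    · rw [h]
      show φ (sQ A) = R A
      rw [hsQA]
      show R (ι Bq) = R A
      rw [hιB]
    · rw [h]
      show φ (sQ Bq) = R Bq
      rw [hsQB]
      show R (ι A) = R Bq
      rw [hιA]
  have hsQfix : ∀ x : ↥Q, (x : B) ∈ P → sQ x = x := by
    intro x hx
    have h1 : x ≠ A := by
      intro hc
      apply hPa
      have h3 : (x : B) = a := congrArg Subtype.val hc
      rw [← h3]; exact hx
    have h2 : x ≠ Bq := by
      intro hc
      apply hPb
      have h3 : (x : B) = b := congrArg Subtype.val hc
      rw [← h3]; exact hx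
    exact Equiv.swap_apply_of_ne_of_ne h1 h2
  set e : ↥P ≃ ↥P'' :=
    { toFun := fun x => ⟨⟨↑x, hPQ x.2⟩, hmem'' _ x.2⟩
      invFun := fun y => ⟨↑↑y, mem_inSub.1 y.2⟩
      left_inv := fun x => Subtype.ext rfl
      right_inv := fun y => Subtype.ext (Subtype.ext rfl) } with hedef
  -- the master chain lemma
  have key_chain : ∀ (π : Equiv.Perm B) (ρ : Equiv.Perm ↥Q), retPerm π Q = ρ →
      ∀ (z : B) (hzP : z ∈ P),
        (firstRet' π P ⟨z, hzP⟩ : B)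
          = ↑↑(firstRet' ρ P'' ⟨⟨z, hPQ hzP⟩, hmem'' _ hzP⟩) := by
    intro π ρ hρ z hzP
    subst hρ
    have hzQ : z ∈ Q := hPQ hzP
    have hEx : ∃ m, 0 < m ∧ (π ^ m) z ∈ P := firstRet'_exists π P ⟨z, hzP⟩
    have hQ' := retPerm_hits π P Q hPQ z hzQ hEx
    have h1 : (firstRet' π P ⟨z, hzP⟩ : B) = rawRet π P z hEx := rawRet_coe π P ⟨z, hzP⟩
    have h2 := rawRet_trans' π P Q hPQ z hzQ hEx hQ'
    have h3 : rawRet (retPerm π Q) (inSub Q P) ⟨z, hzQ⟩ hQ'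
        = ↑(firstRet' (retPerm π Q) P'' ⟨⟨z, hzQ⟩, hmem'' _ hzP⟩) :=
      (rawRet_coe (retPerm π Q) P'' ⟨⟨z, hzQ⟩, hmem'' _ hzP⟩).symm
    rw [h1, h2]
    rw [h3]
  -- common counting facts
  have hKF : K.numF = Nat.card (Quot (fun x y : ↥Q => φ x = y))
      + Nat.card (isoSet K.s0 Q) := numF_eq K
  have hsplit_s0Q : Nat.card (Quot (fun x y : B => K.s0 x = y))
      = Nat.card (Quot (fun x y : ↥Q => R x = y)) + Nat.card (isoSet K.s0 Q) :=
    split_card0 K.s0 Q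
  have hmerge_R : Nat.card (Quot (fun u v : ↥Q => R u = v))
      = Nat.card (Quot (fun u v : ↥Q => (R * sQ) u = v)) + 1 := by
    have hnsc : ¬ R.SameCycle A Bq := by
      rw [hRdef, retPerm_sameCycle_iff]
      exact hNL
    exact swap_merge_card R hnsc
  have hmerge_s0 : Nat.card (Quot (fun u v : B => K.s0 u = v))
      = Nat.card (Quot (fun u v : B => τ u = v)) + 1 := swap_merge_card K.s0 hNL
  have hsplitQ_φ : Nat.card (Quot (fun x y : ↥Q => φ x = y))
      = Nat.card (Quot (fun x y : ↥P'' => firstRet' φ P'' x = y))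
        + Nat.card (isoSet φ P'') := split_card0 φ P''
  have hsplitQ_Rs : Nat.card (Quot (fun x y : ↥Q => (R * sQ) x = y))
      = Nat.card (Quot (fun x y : ↥P'' => firstRet' (R * sQ) P'' x = y))
        + Nat.card (isoSet (R * sQ) P'') := split_card0 (R * sQ) P''
  have hiso_φRs : Nat.card (isoSet φ P'') = Nat.card (isoSet (R * sQ) P'') :=
    iso_congr φ (R * sQ) P'' hout_φRs
  constructor
  · -- contraction preserves faces
    have hCF : (K.contr a).numF
        = Nat.card (Quot (fun x y : ↥P => (K.contr a).faceP x = y))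
          + Nat.card (isoSet τ P) := numF_eq (K.contr a)
    have hsplit_τ : Nat.card (Quot (fun x y : B => τ x = y))
        = Nat.card (Quot (fun x y : ↥P => firstRet' τ P x = y)) + Nat.card (isoSet τ P) :=
      split_card0 τ P
    have hconj_contr_ret : Nat.card (Quot (fun x y : ↥P => firstRet' τ P x = y))
        = Nat.card (Quot (fun x y : ↥P'' => firstRet' (R * sQ) P'' x = y)) := by
      refine quotCard_conj e _ _ ?_
      intro x
      apply Subtype.ext
      apply Subtype.ext
      show (firstRet' τ P x : B) = ↑↑(firstRet' (R * sQ) P'' (e x))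
      exact key_chain τ (R * sQ) hRs ↑x x.2
    have hconj_contr_face : Nat.card (Quot (fun x y : ↥P => (K.contr a).faceP x = y))
        = Nat.card (Quot (fun x y : ↥P'' => firstRet' φ P'' x = y)) := by
      refine quotCard_conj e _ _ ?_
      intro x
      apply Subtype.ext
      apply Subtype.ext
      have hs1P : K.s1 ↑x ∈ P := hPs1 ↑x x.2
      show ((K.contr a).faceP x : B) = ↑↑(firstRet' φ P'' (e x))
      have h1 : ((K.contr a).faceP x : B) = ↑(firstRet' τ P ⟨K.s1 ↑x, hs1P⟩) := rfl
      rw [h1, key_chain τ (R * sQ) hRs (K.s1 ↑x) hs1P]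
      have h0 : φ ((e x : ↥P'') : ↥Q) = (R * sQ) (⟨K.s1 ↑x, hPQ hs1P⟩ : ↥Q) := by
        show R (ι ⟨↑x, hPQ x.2⟩) = R (sQ ⟨K.s1 ↑x, hPQ hs1P⟩)
        rw [hsQfix _ hs1P]
        congr 1
        try exact Subtype.ext rfl
      have h4 := firstRet_sim φ (R * sQ) P'' hout_φRs (e x)
        ⟨⟨K.s1 ↑x, hPQ hs1P⟩, hmem'' _ hs1P⟩ h0
      exact (congrArg Subtype.val h4).symm
    omega
  · -- deletion of a bridge adds one face
    intro hBR
    have hSC_φ : φ.SameCycle A Bq := face_sameCycle K a ha hBR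
    have hsplitC_φs : Nat.card (Quot (fun u v : ↥Q => (φ * sQ) u = v))
        = Nat.card (Quot (fun u v : ↥Q => φ u = v)) + 1 := swap_split_card φ hABne hSC_φ
    have hDF : (K.del a).numF
        = Nat.card (Quot (fun x y : ↥P => (K.del a).faceP x = y))
          + Nat.card (isoSet K.s0 P) := numF_eq (K.del a)
    have hsplit_s0P : Nat.card (Quot (fun x y : B => K.s0 x = y))
        = Nat.card (Quot (fun x y : ↥P => firstRet' K.s0 P x = y))
          + Nat.card (isoSet K.s0 P) := split_card0 K.s0 P
    have hconj_del_ret : Nat.card (Quot (fun x y : ↥P => firstRet' K.s0 P x = y))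
        = Nat.card (Quot (fun x y : ↥P'' => firstRet' R P'' x = y)) := by
      refine quotCard_conj e _ _ ?_
      intro x
      apply Subtype.ext
      apply Subtype.ext
      show (firstRet' K.s0 P x : B) = ↑↑(firstRet' R P'' (e x))
      exact key_chain K.s0 R rfl ↑x x.2
    have hsplitQ_R : Nat.card (Quot (fun x y : ↥Q => R x = y))
        = Nat.card (Quot (fun x y : ↥P'' => firstRet' R P'' x = y))
          + Nat.card (isoSet R P'') := split_card0 R P''
    have hsplitQ_φs : Nat.card (Quot (fun x y : ↥Q => (φ * sQ) x = y))
        = Nat.card (Quot (fun x y : ↥P'' => firstRet' (φ * sQ) P'' x = y))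
          + Nat.card (isoSet (φ * sQ) P'') := split_card0 (φ * sQ) P''
    have hiso_φsR : Nat.card (isoSet (φ * sQ) P'') = Nat.card (isoSet R P'') :=
      iso_congr (φ * sQ) R P'' hout_φsR
    have hconj_del_face : Nat.card (Quot (fun x y : ↥P => (K.del a).faceP x = y))
        = Nat.card (Quot (fun x y : ↥P'' => firstRet' (φ * sQ) P'' x = y)) := by
      refine quotCard_conj e _ _ ?_
      intro x
      apply Subtype.ext
      apply Subtype.ext
      have hs1P : K.s1 ↑x ∈ P := hPs1 ↑x x.2
      show ((K.del a).faceP x : B) = ↑↑(firstRet' (φ * sQ) P'' (e x))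
      have h1 : ((K.del a).faceP x : B) = ↑(firstRet' K.s0 P ⟨K.s1 ↑x, hs1P⟩) := rfl
      rw [h1, key_chain K.s0 R rfl (K.s1 ↑x) hs1P]
      have h0 : (φ * sQ) ((e x : ↥P'') : ↥Q) = R (⟨K.s1 ↑x, hPQ hs1P⟩ : ↥Q) := by
        show φ (sQ ⟨↑x, hPQ x.2⟩) = R ⟨K.s1 ↑x, hPQ hs1P⟩
        rw [hsQfix _ x.2]
        show R (ι ⟨↑x, hPQ x.2⟩) = _
        congr 1
        try exact Subtype.ext rfl
      have h4 := firstRet_sim (φ * sQ) R P'' hout_φsR (e x)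
        ⟨⟨K.s1 ↑x, hPQ hs1P⟩, hmem'' _ hs1P⟩ h0
      exact (congrArg Subtype.val h4).symm
    omega

end RG

end FaceLemmas
section Top

variable {B : Type} [Fintype B] [DecidableEq B]

namespace RG

theorem ext' {K L : RG B} (h1 : K.act = L.act) (h2 : K.s0 = L.s0) (h3 : K.s1 = L.s1) :
    K = L := by
  cases K
  cases L
  simp only at h1 h2 h3
  subst h1; subst h2; subst h3
  rfl

theorem mem_edgeOf (W : RG B) (c x : B) : x ∈ W.edgeOf c ↔ x = c ∨ x = W.s1 c := by
  simp [RG.edgeOf]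

theorem edgeOf_s1 (W : RG B) (c : B) : W.edgeOf (W.s1 c) = W.edgeOf c := by
  unfold RG.edgeOf
  rw [W.invol]
  exact Finset.pair_comm _ _

theorem edge_of_mem (W : RG B) (S : Finset (Finset B)) (hS : S ⊆ W.edges) {x : B}
    (hx : x ∈ S.biUnion id) : W.edgeOf x ∈ S := by
  obtain ⟨t, htS, hxt⟩ := Finset.mem_biUnion.1 hx
  obtain ⟨c, -, rfl⟩ := Finset.mem_image.1 (hS htS)
  rcases (W.mem_edgeOf c x).1 hxt with h | h
  · rwa [h]
  · rw [h, edgeOf_s1]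
    exact htS

theorem s1_mem_biUnion (W : RG B) (S : Finset (Finset B)) (hS : S ⊆ W.edges) {x : B}
    (hx : x ∈ S.biUnion id) : W.s1 x ∈ S.biUnion id := by
  have h1 := edge_of_mem W S hS hx
  refine Finset.mem_biUnion.2 ⟨W.edgeOf x, h1, ?_⟩
  show W.s1 x ∈ W.edgeOf x
  rw [mem_edgeOf]
  exact Or.inr rfl

theorem spanning_act_mem (W : RG B) (S : Finset (Finset B)) (hS : S ⊆ W.edges) (x : B) :
    x ∈ (W.spanning S).act ↔ x ∈ W.act ∧ x ∈ S.biUnion id := by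
  show x ∈ W.act.filter _ ↔ _
  rw [Finset.mem_filter]
  constructor
  · rintro ⟨h1, h2, -⟩
    exact ⟨h1, h2⟩
  · rintro ⟨h1, h2⟩
    exact ⟨h1, h2, s1_mem_biUnion W S hS h2⟩

theorem spanning_edges (W : RG B) (S : Finset (Finset B)) (hS : S ⊆ W.edges) :
    (W.spanning S).edges = S := by
  ext t
  constructor
  · intro ht
    obtain ⟨c, hc, rfl⟩ := Finset.mem_image.1 ht
    have hc2 := ((spanning_act_mem W S hS c).1 hc).2
    exact edge_of_mem W S hS hc2
  · intro ht
    obtain ⟨c, hcact, rfl⟩ := Finset.mem_image.1 (hS ht)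
    have hcb : c ∈ S.biUnion id := by
      refine Finset.mem_biUnion.2 ⟨W.edgeOf c, ht, ?_⟩
      show c ∈ W.edgeOf c
      rw [mem_edgeOf]
      exact Or.inl rfl
    refine Finset.mem_image.2 ⟨c, ?_, rfl⟩
    exact (spanning_act_mem W S hS c).2 ⟨hcact, hcb⟩

theorem spanning_numE (W : RG B) (S : Finset (Finset B)) (hS : S ⊆ W.edges) :
    (W.spanning S).numE = S.card := by
  show (W.spanning S).edges.card = S.card
  rw [spanning_edges W S hS]

end RG

theorem toRG_contr_edges (D : RibbonGraph B) (a : B) :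
    (D.toRG.contr a).edges = D.toRG.edges.erase (D.toRG.edgeOf a) := by
  set G := D.toRG with hG
  set b := G.s1 a with hb
  ext t
  constructor
  · intro ht
    obtain ⟨c, hc, rfl⟩ := Finset.mem_image.1 ht
    have hc' : c ∈ Finset.univ \ ({a, G.s1 a} : Finset B) := hc
    rw [Finset.mem_sdiff, Finset.mem_insert, Finset.mem_singleton] at hc'
    push_neg at hc'
    obtain ⟨-, hca, hcb⟩ := hc'
    have he1 : (G.contr a).edgeOf c = G.edgeOf c := rfl
    rw [he1]
    refine Finset.mem_erase.2 ⟨?_, Finset.mem_image_of_mem _ (Finset.mem_univ c)⟩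
    intro hcon
    have hself : c ∈ G.edgeOf c := by rw [RG.mem_edgeOf]; exact Or.inl rfl
    rw [hcon, RG.mem_edgeOf] at hself
    rcases hself with h | h
    · exact hca h
    · exact hcb h
  · intro ht
    obtain ⟨hne, ht2⟩ := Finset.mem_erase.1 ht
    obtain ⟨c, -, rfl⟩ := Finset.mem_image.1 ht2
    have hca : c ≠ a := by
      intro hc; rw [hc] at hne; exact hne rfl
    have hcb : c ≠ b := by
      intro hc
      rw [hc, hb, RG.edgeOf_s1] at hne
      exact hne rfl
    have he1 : G.edgeOf c = (G.contr a).edgeOf c := rfl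
    rw [he1]
    refine Finset.mem_image_of_mem _ ?_
    show c ∈ Finset.univ \ ({a, G.s1 a} : Finset B)
    rw [Finset.mem_sdiff, Finset.mem_insert, Finset.mem_singleton]
    push_neg
    exact ⟨Finset.mem_univ c, hca, hcb⟩

theorem toRG_biUnion_avoid (D : RibbonGraph B) (a : B) (S : Finset (Finset B))
    (hS : S ⊆ D.toRG.edges.erase (D.toRG.edgeOf a)) :
    a ∉ S.biUnion id ∧ D.toRG.s1 a ∉ S.biUnion id := by
  set G := D.toRG with hG
  have hSE : S ⊆ G.edges := hS.trans (Finset.erase_subset _ _)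
  constructor
  · intro hc
    have h1 := RG.edge_of_mem G S hSE hc
    exact Finset.notMem_erase (G.edgeOf a) G.edges (hS h1)
  · intro hc
    have h1 := RG.edge_of_mem G S hSE hc
    rw [RG.edgeOf_s1] at h1
    exact Finset.notMem_erase (G.edgeOf a) G.edges (hS h1)

/-- membership in the active part of the big spanning subgraph. -/
theorem toRG_spanning_insert_act (D : RibbonGraph B) (a : B) (S : Finset (Finset B))
    (hS : S ⊆ D.toRG.edges.erase (D.toRG.edgeOf a)) (x : B) :
    x ∈ (D.toRG.spanning (insert (D.toRG.edgeOf a) S)).act ↔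
      (x = a ∨ x = D.toRG.s1 a) ∨ x ∈ S.biUnion id := by
  set G := D.toRG with hG
  have hSE : S ⊆ G.edges := hS.trans (Finset.erase_subset _ _)
  have heE : G.edgeOf a ∈ G.edges := Finset.mem_image_of_mem _ (Finset.mem_univ a)
  rw [RG.spanning_act_mem G _ (Finset.insert_subset heE hSE) x, Finset.biUnion_insert]
  simp only [Finset.mem_union, id]
  constructor
  · rintro ⟨-, h2 | h2⟩
    · exact Or.inl ((G.mem_edgeOf a x).1 h2)
    · exact Or.inr h2
  · intro h
    refine ⟨Finset.mem_univ x, ?_⟩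
    rcases h with h | h
    · exact Or.inl ((G.mem_edgeOf a x).2 h)
    · exact Or.inr h

theorem toRG_spanning_del (D : RibbonGraph B) (a : B) (S : Finset (Finset B))
    (hS : S ⊆ D.toRG.edges.erase (D.toRG.edgeOf a)) :
    D.toRG.spanning S = (D.toRG.spanning (insert (D.toRG.edgeOf a) S)).del a := by
  set G := D.toRG with hG
  have hSE : S ⊆ G.edges := hS.trans (Finset.erase_subset _ _)
  obtain ⟨hna, hnb⟩ := toRG_biUnion_avoid D a S hS
  refine RG.ext' ?_ rfl rfl
  ext x
  show x ∈ (G.spanning S).act ↔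
    x ∈ (G.spanning (insert (G.edgeOf a) S)).act \ {a, G.s1 a}
  rw [Finset.mem_sdiff, Finset.mem_insert, Finset.mem_singleton,
    RG.spanning_act_mem G S hSE x, toRG_spanning_insert_act D a S hS x]
  constructor
  · rintro ⟨-, h2⟩
    refine ⟨Or.inr h2, ?_⟩
    push_neg
    constructor
    · intro hc; rw [hc] at h2; exact hna h2
    · intro hc; rw [hc] at h2; exact hnb h2
  · rintro ⟨h1, h2⟩
    push_neg at h2
    rcases h1 with h1 | h1
    · rcases h1 with h | h
      · exact absurd h h2.1
      · exact absurd h h2.2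
    · exact ⟨Finset.mem_univ x, h1⟩

theorem toRG_spanning_contr (D : RibbonGraph B) (a : B) (S : Finset (Finset B))
    (hS : S ⊆ D.toRG.edges.erase (D.toRG.edgeOf a)) :
    (D.toRG.contr a).spanning S = (D.toRG.spanning (insert (D.toRG.edgeOf a) S)).contr a := by
  set G := D.toRG with hG
  have hSE' : S ⊆ (G.contr a).edges := by
    rw [toRG_contr_edges]
    exact hS
  obtain ⟨hna, hnb⟩ := toRG_biUnion_avoid D a S hS
  refine RG.ext' ?_ rfl rfl
  ext x
  show x ∈ ((G.contr a).spanning S).act ↔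
    x ∈ (G.spanning (insert (G.edgeOf a) S)).act \ {a, G.s1 a}
  rw [Finset.mem_sdiff, Finset.mem_insert, Finset.mem_singleton,
    RG.spanning_act_mem (G.contr a) S hSE' x, toRG_spanning_insert_act D a S hS x]
  have hcact : x ∈ (G.contr a).act ↔ ¬(x = a ∨ x = G.s1 a) := by
    show x ∈ Finset.univ \ {a, G.s1 a} ↔ _
    rw [Finset.mem_sdiff, Finset.mem_insert, Finset.mem_singleton]
    constructor
    · rintro ⟨-, h⟩; exact h
    · intro h; exact ⟨Finset.mem_univ x, h⟩
  rw [hcact]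
  constructor
  · rintro ⟨h1, h2⟩
    push_neg at h1
    refine ⟨Or.inr h2, ?_⟩
    push_neg
    exact h1
  · rintro ⟨h1, h2⟩
    push_neg at h2
    rcases h1 with h1 | h1
    · rcases h1 with h | h
      · exact absurd h h2.1
      · exact absurd h h2.2
    · exact ⟨by push_neg; exact h2, h1⟩

end Top
/-- If the edge `e = {a, σ₁ a}` is a bridge, then `C(𝔻) = X · C(𝔻/e)`. -/
theorem brt_bridge (D : RibbonGraph B) (a : B) (h : D.toRG.IsBridge a) :
    D.toRG.brt = MvPolynomial.X 0 * (D.toRG.contr a).brt := by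
  classical
  set G := D.toRG with hG
  set e := G.edgeOf a with he
  set G' := G.contr a with hG'
  have haG : a ∈ G.act := Finset.mem_univ a
  have heE : e ∈ G.edges := Finset.mem_image_of_mem _ haG
  -- bridge hypotheses
  have hbridge : (G.del a).numK = G.numK + 1 := h
  have hBRtop : ¬ Relation.EqvGen (glob G.s0 G.s1 (G.act \ {a, G.s1 a})) a (G.s1 a) := by
    intro hEq
    have h2 := RG.del_numK_eq G a haG hEq
    omega
  have hNLtop : ¬ G.s0.SameCycle a (G.s1 a) := by
    intro hsc
    apply hBRtop
    refine eqvGen_closure (r := fun x y => G.s0 x = y) ?_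
      ((sameCycle_iff_eqvGen G.s0 a (G.s1 a)).1 hsc)
    exact fun x y hxy => Relation.EqvGen.rel _ _ (Or.inl hxy)
  have hE' : G'.edges = G.edges.erase e := toRG_contr_edges D a
  have hkGG' : G'.numK = G.numK := RG.contr_numK G a haG hNLtop
  -- sum manipulation
  have hsplit : G.edges = insert e (G.edges.erase e) := (Finset.insert_erase heE).symm
  have hdisj : Disjoint (G.edges.erase e).powerset
      ((G.edges.erase e).powerset.image (insert e)) := by
    rw [Finset.disjoint_left]
    intro S h1 h2
    obtain ⟨S', -, rfl⟩ := Finset.mem_image.1 h2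
    exact Finset.notMem_erase e G.edges
      ((Finset.mem_powerset.1 h1) (Finset.mem_insert_self e S'))
  have hinj : ∀ x ∈ (G.edges.erase e).powerset, ∀ y ∈ (G.edges.erase e).powerset,
      insert e x = insert e y → x = y := by
    intro x hx y hy hxy
    have hex : e ∉ x := fun hc =>
      Finset.notMem_erase e G.edges ((Finset.mem_powerset.1 hx) hc)
    have hey : e ∉ y := fun hc =>
      Finset.notMem_erase e G.edges ((Finset.mem_powerset.1 hy) hc)
    rw [← Finset.erase_insert hex, hxy, Finset.erase_insert hey]
  simp only [RG.brt]
  rw [hsplit, Finset.powerset_insert, Finset.sum_union hdisj, Finset.sum_image hinj, hE',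
    ← Finset.sum_add_distrib, Finset.mul_sum]
  refine Finset.sum_congr rfl ?_
  intro S hS
  have hSsub : S ⊆ G.edges.erase e := Finset.mem_powerset.1 hS
  have hSedges : S ⊆ G.edges := hSsub.trans (Finset.erase_subset _ _)
  have heS : e ∉ S := fun hc => Finset.notMem_erase e G.edges (hSsub hc)
  have hSSsub : insert e S ⊆ G.edges := Finset.insert_subset heE hSedges
  set K := G.spanning (insert e S) with hK
  have hE1 : G.spanning S = K.del a := toRG_spanning_del D a S hSsub
  have hE2 : G'.spanning S = K.contr a := toRG_spanning_contr D a S hSsub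
  have haK : a ∈ K.act := by
    rw [hK, RG.spanning_act_mem G _ hSSsub a]
    refine ⟨Finset.mem_univ a, ?_⟩
    rw [Finset.biUnion_insert]
    refine Finset.mem_union_left _ ?_
    show a ∈ G.edgeOf a
    rw [RG.mem_edgeOf]
    exact Or.inl rfl
  have hNLK : ¬ K.s0.SameCycle a (K.s1 a) := hNLtop
  have hBRK : ¬ Relation.EqvGen (glob K.s0 K.s1 (K.act \ {a, K.s1 a})) a (K.s1 a) := by
    intro hEq
    apply hBRtop
    refine eqvGen_closure ?_ hEq
    intro x y hxy
    refine Relation.EqvGen.rel _ _ ?_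
    rcases hxy with h1 | ⟨h1, h2⟩
    · exact Or.inl h1
    · refine Or.inr ⟨?_, h2⟩
      exact Finset.sdiff_subset_sdiff (Finset.subset_univ _) (Finset.Subset.refl _) h1
  -- the numerical facts
  have f1 : (G.spanning S).numK = K.numK + 1 := by
    rw [hE1]; exact RG.del_numK_add K a haK hBRK
  have f2 : (G'.spanning S).numK = K.numK := by
    rw [hE2]; exact RG.contr_numK K a haK hNLK
  have f3 : K.numV = (G'.spanning S).numV + 1 := by
    rw [hE2]; exact RG.contr_numV K a hNLK
  have f4 : (G.spanning S).numV = K.numV := rfl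
  obtain ⟨f6, f5'⟩ := RG.contr_del_numF K a haK hNLK
  have f5 : (G.spanning S).numF = K.numF + 1 := by
    rw [hE1]; exact f5' hBRK
  have f6' : (G'.spanning S).numF = K.numF := by
    rw [hE2]; exact f6
  have f7 : (G.spanning S).numE = S.card := RG.spanning_numE G S hSedges
  have f8 : K.numE = S.card + 1 := by
    rw [hK]
    rw [RG.spanning_numE G _ hSSsub]
    exact Finset.card_insert_of_notMem heS
  have f9 : (G'.spanning S).numE = S.card := by
    refine RG.spanning_numE G' S ?_
    rw [hE']
    exact hSsub
  have f10 : G'.numK = G.numK := hkGG'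
  have f11 : G'.numK ≤ (G'.spanning S).numK :=
    RG.numK_mono (G'.spanning S) G' rfl rfl (Finset.filter_subset _ _)
  -- exponent identities
  have hk1 : (G.spanning S).numK - G.numK = ((G'.spanning S).numK - G'.numK) + 1 := by omega
  have hk2 : K.numK - G.numK = (G'.spanning S).numK - G'.numK := by omega
  have hn1 : (G.spanning S).numN = (G'.spanning S).numN := by
    simp only [RG.numN]
    omega
  have hn2 : K.numN = (G'.spanning S).numN := by
    simp only [RG.numN]
    omega
  have hg1 : (G.spanning S).genus = (G'.spanning S).genus := by
    simp only [RG.genus]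
    have hnum : 2 * (G.spanning S).numK + (G.spanning S).numE - (G.spanning S).numV
        - (G.spanning S).numF
        = 2 * (G'.spanning S).numK + (G'.spanning S).numE - (G'.spanning S).numV
          - (G'.spanning S).numF := by omega
    rw [hnum]
  have hg2 : K.genus = (G'.spanning S).genus := by
    simp only [RG.genus]
    have hnum : 2 * K.numK + K.numE - K.numV - K.numF
        = 2 * (G'.spanning S).numK + (G'.spanning S).numE - (G'.spanning S).numV
          - (G'.spanning S).numF := by omega
    rw [hnum]
  rw [hk1, hk2, hn1, hn2, hg1, hg2, pow_succ]
  ring
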